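/- arXiv:2604.17904 — 2 statements merged into one kernel-verified Lean document; each statement's English description precedes it below -/
import Mathlib

section
/- Abel-type theorem: let (a_n)_c = [a_{nε}]_c ∈ ℂ~_c, c = [c_ε] ∈ ℂ~, and ẑ ∈ σ((a_n)_c, c). Assume (a_n(ẑ − c)^n)_{n∈ℕ~} is eventually bounded, i.e. there are representatives [a_{nε}]_c = (a_n)_c, [ẑ_ε] = ẑ, [c_ε] = c and a ρ-moderate net (K_ε) of positive reals with |a_{nε}(ẑ_ε − c_ε)^n| < K_ε for all n ∈ ℕ and ε small. Then for every z ∈ B_{|ẑ−c|}(c) and every representative [z_ε] = z: (1) the net (|a_{nε}(z_ε − c_ε)^n|)_{n,ε} is ρ-moderate over hypersums and the hyperseries Σ_{n∈ℕ~} |a_n(z − c)^n| converges in ℝ~ (so Σ_{n∈ℕ~} a_n(z − c)^n converges absolutely), (a_n(z − c)^n)_{n∈ℕ~} is eventually bounded, and Σ_{n∈ℕ~} a_n(z − c)^n = [Σ_{n=0}^{+∞} a_{nε}(z_ε − c_ε)^n] ∈ ℂ~; (2) z is a sharply interior point of σ((a_n)_c, c), i.e. there is t ∈ ℝ~ with t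 > 0 and B_t(z) ⊆ σ((a_n)_c, c). -/
open Filter

noncomputable section

/-- `P ε` holds for all ε small. -/
def EvS (P : ℝ → Prop) : Prop := ∃ ε₀ : ℝ, 0 < ε₀ ∧ ε₀ ≤ 1 ∧ ∀ ε : ℝ, 0 < ε → ε ≤ ε₀ → P ε

theorem EvS.mono {P Q : ℝ → Prop} (h : EvS P) (h2 : ∀ ε, 0 < ε → ε ≤ 1 → P ε → Q ε) : EvS Q := by
  obtain ⟨e, he, he1, hP⟩ := h
  exact ⟨e, he, he1, fun ε hε hεe => h2 ε hε (hεe.trans he1) (hP ε hε hεe)⟩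

theorem EvS.and {P Q : ℝ → Prop} (h : EvS P) (h' : EvS Q) : EvS fun ε => P ε ∧ Q ε := by
  obtain ⟨e, he, he1, hP⟩ := h
  obtain ⟨e', he', he1', hQ⟩ := h'
  exact ⟨min e e', lt_min he he', le_trans (min_le_left _ _) he1, fun ε hε hm =>
    ⟨hP ε hε (le_trans hm (min_le_left _ _)), hQ ε hε (le_trans hm (min_le_right _ _))⟩⟩

/-- A gauge: a nonincreasing net of reals in (0,1] tending to 0. -/
structure Gauge where
  ρ : ℝ → ℝ
  pos : ∀ ε : ℝ, 0 < ε → ε ≤ 1 → 0 < ρ ε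
  le_one : ∀ ε : ℝ, 0 < ε → ε ≤ 1 → ρ ε ≤ 1
  anti : ∀ ε ε' : ℝ, 0 < ε → ε ≤ ε' → ε' ≤ 1 → ρ ε' ≤ ρ ε
  to_zero : Tendsto ρ (nhdsWithin 0 (Set.Ioi 0)) (nhds 0)

namespace Gauge

theorem evs_le (g : Gauge) {δ : ℝ} (hδ : 0 < δ) : EvS fun ε => g.ρ ε ≤ δ := by
  have h := g.to_zero.eventually_lt_const hδ
  rw [eventually_nhdsWithin_iff, Metric.eventually_nhds_iff] at h
  obtain ⟨e, he, hP⟩ := h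
  refine ⟨min (e / 2) 1, by positivity, min_le_right _ _, fun ε hε hεe => ?_⟩
  have hd : dist ε 0 < e := by
    rw [Real.dist_eq, sub_zero, abs_of_pos hε]
    have h1 : ε ≤ e / 2 := le_trans hεe (min_le_left _ _)
    linarith
  exact (hP hd (Set.mem_Ioi.mpr hε)).le

variable {𝕜 : Type} [RCLike 𝕜]

/-- ρ-moderate nets. -/
def Mod (g : Gauge) (x : ℝ → 𝕜) : Prop := ∃ N : ℕ, EvS fun ε => ‖x ε‖ ≤ g.ρ ε ^ (-(N : ℤ))

/-- ρ-negligible nets. -/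
def Negl (g : Gauge) (x : ℝ → 𝕜) : Prop := ∀ q : ℕ, EvS fun ε => ‖x ε‖ ≤ g.ρ ε ^ q

theorem Negl.mod {g : Gauge} {x : ℝ → 𝕜} (h : g.Negl x) : g.Mod x := by
  refine ⟨0, (h 0).mono fun ε hε hε1 hx => ?_⟩
  simpa using hx

theorem negl_sub_self (g : Gauge) (x : ℝ → 𝕜) : g.Negl fun ε => x ε - x ε := fun q =>
  ⟨1, one_pos, le_refl 1, fun ε hε hε1 => by
    simp only [sub_self, norm_zero]
    exact pow_nonneg (g.pos ε hε hε1).le q⟩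

theorem negl_of_evs_eq (g : Gauge) {x y : ℝ → 𝕜} (h : EvS fun ε => x ε = y ε) :
    g.Negl fun ε => x ε - y ε := fun q => h.mono fun ε hε hε1 he => by
  show ‖x ε - y ε‖ ≤ _
  rw [he, sub_self, norm_zero]; exact pow_nonneg (g.pos ε hε hε1).le q

theorem Negl.symm_sub {g : Gauge} {x y : ℝ → 𝕜} (h : g.Negl fun ε => x ε - y ε) :
    g.Negl fun ε => y ε - x ε := fun q => (h q).mono fun ε _ _ hx => by rwa [norm_sub_rev]

theorem Negl.add {g : Gauge} {x y : ℝ → 𝕜} (hx : g.Negl x) (hy : g.Negl y) :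
    g.Negl fun ε => x ε + y ε := by
  intro q
  refine (((hx (q+1)).and (hy (q+1))).and (g.evs_le (by norm_num : (0:ℝ) < 1/2))).mono
    fun ε hε hε1 h => ?_
  obtain ⟨⟨h1, h2⟩, h3⟩ := h
  have hρ := g.pos ε hε hε1
  calc ‖x ε + y ε‖ ≤ ‖x ε‖ + ‖y ε‖ := norm_add_le _ _
    _ ≤ g.ρ ε ^ (q+1) + g.ρ ε ^ (q+1) := add_le_add h1 h2
    _ = 2 * g.ρ ε * g.ρ ε ^ q := by ring
    _ ≤ 1 * g.ρ ε ^ q := by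
        apply mul_le_mul_of_nonneg_right _ (pow_nonneg hρ.le q)
        linarith
    _ = g.ρ ε ^ q := one_mul _

theorem Negl.neg {g : Gauge} {y : ℝ → 𝕜} (hy : g.Negl y) : g.Negl fun ε => -(y ε) :=
  fun q => (hy q).mono fun ε _ _ h => by
    show ‖-(y ε)‖ ≤ _
    rwa [norm_neg]

theorem Negl.sub {g : Gauge} {x y : ℝ → 𝕜} (hx : g.Negl x) (hy : g.Negl y) :
    g.Negl fun ε => x ε - y ε := by
  have h := hx.add hy.neg
  have heq : (fun ε => x ε + -(y ε)) = fun ε => x ε - y ε := by funext ε; ring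
  rwa [heq] at h

theorem Negl.triangle {g : Gauge} {x y z : ℝ → 𝕜} (h1 : g.Negl fun ε => x ε - y ε)
    (h2 : g.Negl fun ε => y ε - z ε) : g.Negl fun ε => x ε - z ε := by
  have h := h1.add h2
  have heq : (fun ε => (x ε - y ε) + (y ε - z ε)) = fun ε => x ε - z ε := by
    funext ε; ring
  rwa [heq] at h

end Gauge

namespace Gauge

variable {𝕜 : Type} [RCLike 𝕜]

theorem zpow_neg_le (g : Gauge) {ε : ℝ} (hε : 0 < ε) (hε1 : ε ≤ 1) {a b : ℕ} (h : a ≤ b) :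
    g.ρ ε ^ (-(a:ℤ)) ≤ g.ρ ε ^ (-(b:ℤ)) := by
  apply zpow_le_zpow_right_of_le_one₀ (g.pos ε hε hε1) (g.le_one ε hε hε1)
  omega

theorem Mod.of_norm_le {g : Gauge} {x : ℝ → 𝕜} {y : ℝ → ℝ} (hy : g.Mod y)
    (h : ∀ ε, 0 < ε → ε ≤ 1 → ‖x ε‖ ≤ |y ε|) : g.Mod x := by
  obtain ⟨N, hN⟩ := hy
  exact ⟨N, hN.mono fun ε hε hε1 hb => le_trans (h ε hε hε1) (by rwa [Real.norm_eq_abs] at hb)⟩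

theorem Mod.add {g : Gauge} {x y : ℝ → 𝕜} (hx : g.Mod x) (hy : g.Mod y) :
    g.Mod fun ε => x ε + y ε := by
  obtain ⟨N, hN⟩ := hx; obtain ⟨M, hM⟩ := hy
  refine ⟨N + M + 1, ((hN.and hM).and (g.evs_le (by norm_num : (0:ℝ) < 1/2))).mono
    fun ε hε hε1 h => ?_⟩
  obtain ⟨⟨h1, h2⟩, h3⟩ := h
  have hρ := g.pos ε hε hε1
  have e1 : g.ρ ε ^ (-(N:ℤ)) ≤ g.ρ ε ^ (-((N+M:ℕ):ℤ)) := g.zpow_neg_le hε hε1 (by omega)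
  have e2 : g.ρ ε ^ (-(M:ℤ)) ≤ g.ρ ε ^ (-((N+M:ℕ):ℤ)) := g.zpow_neg_le hε hε1 (by omega)
  have key : g.ρ ε ^ (-((N+M:ℕ):ℤ)) = g.ρ ε ^ (-((N+M+1:ℕ):ℤ)) * g.ρ ε := by
    rw [← zpow_add_one₀ hρ.ne']
    congr 1
    push_cast
    ring
  have hpos : (0:ℝ) < g.ρ ε ^ (-((N+M+1:ℕ):ℤ)) := zpow_pos hρ _
  calc ‖x ε + y ε‖ ≤ ‖x ε‖ + ‖y ε‖ := norm_add_le _ _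
    _ ≤ g.ρ ε ^ (-((N+M:ℕ):ℤ)) + g.ρ ε ^ (-((N+M:ℕ):ℤ)) := add_le_add (h1.trans e1) (h2.trans e2)
    _ = 2 * g.ρ ε * g.ρ ε ^ (-((N+M+1:ℕ):ℤ)) := by rw [key]; ring
    _ ≤ 1 * g.ρ ε ^ (-((N+M+1:ℕ):ℤ)) := by
        apply mul_le_mul_of_nonneg_right _ hpos.le
        linarith
    _ = g.ρ ε ^ (-((N+M+1:ℕ):ℤ)) := one_mul _

theorem Mod.neg {g : Gauge} {x : ℝ → 𝕜} (hx : g.Mod x) : g.Mod fun ε => -(x ε) := by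
  obtain ⟨N, hN⟩ := hx
  exact ⟨N, hN.mono fun ε _ _ h => by rwa [norm_neg]⟩

theorem Mod.sub {g : Gauge} {x y : ℝ → 𝕜} (hx : g.Mod x) (hy : g.Mod y) :
    g.Mod fun ε => x ε - y ε := by
  have h := hx.add hy.neg
  have heq : (fun ε => x ε + -(y ε)) = fun ε => x ε - y ε := by funext ε; ring
  rwa [heq] at h

theorem Mod.mul {g : Gauge} {x y : ℝ → 𝕜} (hx : g.Mod x) (hy : g.Mod y) :
    g.Mod fun ε => x ε * y ε := by
  obtain ⟨N, hN⟩ := hx; obtain ⟨M, hM⟩ := hy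
  refine ⟨N + M, (hN.and hM).mono fun ε hε hε1 h => ?_⟩
  obtain ⟨h1, h2⟩ := h
  have hρ := g.pos ε hε hε1
  calc ‖x ε * y ε‖ = ‖x ε‖ * ‖y ε‖ := norm_mul _ _
    _ ≤ g.ρ ε ^ (-(N:ℤ)) * g.ρ ε ^ (-(M:ℤ)) :=
        mul_le_mul h1 h2 (norm_nonneg _) (zpow_nonneg hρ.le _)
    _ = g.ρ ε ^ (-((N+M:ℕ):ℤ)) := by rw [← zpow_add₀ hρ.ne']; congr 1; push_cast; ring

theorem Mod.norm {g : Gauge} {x : ℝ → 𝕜} (hx : g.Mod x) : g.Mod fun ε => ‖x ε‖ := by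
  obtain ⟨N, hN⟩ := hx
  exact ⟨N, hN.mono fun ε _ _ h => by rwa [norm_norm]⟩

theorem Negl.mul_mod {g : Gauge} {x y : ℝ → 𝕜} (hx : g.Negl x) (hy : g.Mod y) :
    g.Negl fun ε => x ε * y ε := by
  obtain ⟨M, hM⟩ := hy
  intro q
  refine ((hx (q + M)).and hM).mono fun ε hε hε1 h => ?_
  obtain ⟨h1, h2⟩ := h
  have hρ := g.pos ε hε hε1
  calc ‖x ε * y ε‖ = ‖x ε‖ * ‖y ε‖ := norm_mul _ _
    _ ≤ g.ρ ε ^ (q+M) * g.ρ ε ^ (-(M:ℤ)) :=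
        mul_le_mul h1 h2 (norm_nonneg _) (pow_nonneg hρ.le _)
    _ = g.ρ ε ^ q := by
        rw [← zpow_natCast (g.ρ ε) (q+M), ← zpow_add₀ hρ.ne', ← zpow_natCast (g.ρ ε) q]
        congr 1; push_cast; ring

theorem mod_const (g : Gauge) (c : 𝕜) (hc : ‖c‖ ≤ 1) : g.Mod fun _ => c := by
  refine ⟨0, 1, one_pos, le_refl 1, fun ε hε hε1 => ?_⟩
  simpa using hc

theorem mod_pow (g : Gauge) (q : ℕ) : g.Mod fun ε => g.ρ ε ^ q := by
  refine ⟨0, 1, one_pos, le_refl 1, fun ε hε hε1 => ?_⟩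
  have hρ := g.pos ε hε hε1
  show ‖g.ρ ε ^ q‖ ≤ _
  rw [Real.norm_eq_abs, abs_of_nonneg (pow_nonneg hρ.le q)]
  simpa using pow_le_one₀ hρ.le (g.le_one ε hε hε1)

theorem mod_zpow_neg (g : Gauge) (q : ℕ) : g.Mod fun ε => g.ρ ε ^ (-(q:ℤ)) := by
  refine ⟨q, 1, one_pos, le_refl 1, fun ε hε hε1 => ?_⟩
  have hρ := g.pos ε hε hε1
  show ‖g.ρ ε ^ (-(q:ℤ))‖ ≤ _
  rw [Real.norm_eq_abs, abs_of_nonneg (zpow_nonneg hρ.le _)]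

/-- Hypernatural moderateness. -/
def NMod (g : Gauge) (n : ℝ → ℕ) : Prop := g.Mod fun ε => (n ε : ℝ)

end Gauge

instance gSetoid (g : Gauge) (𝕜 : Type) [RCLike 𝕜] : Setoid {x : ℝ → 𝕜 // g.Mod x} where
  r a b := g.Negl fun ε => a.1 ε - b.1 ε
  iseqv := ⟨fun a => g.negl_sub_self a.1, fun h => h.symm_sub, fun h h' => h.triangle h'⟩

instance natSetoid (g : Gauge) : Setoid {n : ℝ → ℕ // g.NMod n} where
  r a b := g.Negl fun ε => (a.1 ε : ℝ) - (b.1 ε : ℝ)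
  iseqv := ⟨fun a => g.negl_sub_self _, fun h => h.symm_sub, fun h h' => h.triangle h'⟩

/-- The ring of Robinson-Colombeau generalized numbers (ℂ~ for 𝕜 = ℂ, ℝ~ for 𝕜 = ℝ). -/
abbrev GQ (g : Gauge) (𝕜 : Type) [RCLike 𝕜] := Quotient (gSetoid g 𝕜)

abbrev Ct (g : Gauge) := GQ g ℂ
abbrev Rt (g : Gauge) := GQ g ℝ

/-- The set of hypernatural numbers ℕ~. -/
abbrev Nt (g : Gauge) := Quotient (natSetoid g)

def GQ.mk (g : Gauge) {𝕜 : Type} [RCLike 𝕜] (x : ℝ → 𝕜) (h : g.Mod x) : GQ g 𝕜 :=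
  Quotient.mk (gSetoid g 𝕜) ⟨x, h⟩

/-- `x` is a representative of the generalized number `z`. -/
def IsRep (g : Gauge) {𝕜 : Type} [RCLike 𝕜] (x : ℝ → 𝕜) (z : GQ g 𝕜) : Prop :=
  ∃ h : g.Mod x, GQ.mk g x h = z

def Nt.mk (g : Gauge) (n : ℝ → ℕ) (h : g.NMod n) : Nt g := Quotient.mk (natSetoid g) ⟨n, h⟩

def Nt.IsRep (g : Gauge) (n : ℝ → ℕ) (m : Nt g) : Prop := ∃ h : g.NMod n, Nt.mk g n h = m

/-- dρ^q as an element of ℝ~. -/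
def Gauge.dpow (g : Gauge) (q : ℕ) : Rt g := GQ.mk g (fun ε => g.ρ ε ^ q) (g.mod_pow q)

/-- dρ^(−q) as an element of ℝ~. -/
def Gauge.dpowNeg (g : Gauge) (q : ℕ) : Rt g := GQ.mk g (fun ε => g.ρ ε ^ (-(q:ℤ))) (g.mod_zpow_neg q)

def GQ.zero (g : Gauge) (𝕜 : Type) [RCLike 𝕜] : GQ g 𝕜 :=
  GQ.mk g (fun _ => 0) (g.mod_const 0 (by simp))

def GQ.one (g : Gauge) (𝕜 : Type) [RCLike 𝕜] : GQ g 𝕜 :=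
  GQ.mk g (fun _ => 1) (g.mod_const 1 (by simp))

variable {𝕜 : Type} [RCLike 𝕜]

/-- Order relation on ℝ~ (via some representatives). -/
def Rt.le (g : Gauge) (x y : Rt g) : Prop :=
  ∃ a b : {u : ℝ → ℝ // g.Mod u}, Quotient.mk (gSetoid g ℝ) a = x ∧
    Quotient.mk (gSetoid g ℝ) b = y ∧ EvS fun ε => a.1 ε ≤ b.1 ε

/-- Strict order relation on ℝ~: `x < y` iff `y − x ≥ dρ^m` for some m. -/
def Rt.lt (g : Gauge) (x y : Rt g) : Prop :=
  ∃ a b : {u : ℝ → ℝ // g.Mod u}, Quotient.mk (gSetoid g ℝ) a = x ∧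
    Quotient.mk (gSetoid g ℝ) b = y ∧ ∃ m : ℕ, EvS fun ε => g.ρ ε ^ m ≤ b.1 ε - a.1 ε

/-- Order on ℕ~. -/
def Nt.le (g : Gauge) (m n : Nt g) : Prop :=
  ∃ a b : {k : ℝ → ℕ // g.NMod k}, Quotient.mk (natSetoid g) a = m ∧
    Quotient.mk (natSetoid g) b = n ∧ EvS fun ε => a.1 ε ≤ b.1 ε

/-- The relation `|z − w| < r` between generalized numbers, r ∈ ℝ~. -/
def GQ.absLt (g : Gauge) (z w : GQ g 𝕜) (r : Rt g) : Prop :=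
  ∃ a b : {x : ℝ → 𝕜 // g.Mod x}, ∃ u : {x : ℝ → ℝ // g.Mod x},
    Quotient.mk (gSetoid g 𝕜) a = z ∧ Quotient.mk (gSetoid g 𝕜) b = w ∧
    Quotient.mk (gSetoid g ℝ) u = r ∧
    ∃ m : ℕ, EvS fun ε => ‖a.1 ε - b.1 ε‖ + g.ρ ε ^ m ≤ u.1 ε

/-- The relation `|z − w| ≤ r`. -/
def GQ.absLe (g : Gauge) (z w : GQ g 𝕜) (r : Rt g) : Prop :=
  ∃ a b : {x : ℝ → 𝕜 // g.Mod x}, ∃ u : {x : ℝ → ℝ // g.Mod x},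
    Quotient.mk (gSetoid g 𝕜) a = z ∧ Quotient.mk (gSetoid g 𝕜) b = w ∧
    Quotient.mk (gSetoid g ℝ) u = r ∧ EvS fun ε => ‖a.1 ε - b.1 ε‖ ≤ u.1 ε

/-- `x ∈ ℂ~` is invertible. -/
def GQ.Invertible (g : Gauge) (x : GQ g 𝕜) : Prop :=
  ∃ a : {u : ℝ → 𝕜 // g.Mod u}, Quotient.mk (gSetoid g 𝕜) a = x ∧
    ∃ m : ℕ, EvS fun ε => g.ρ ε ^ m ≤ ‖a.1 ε‖

/-- l is the hyperlimit of the hypersequence a. -/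
def HyperLim (g : Gauge) (a : Nt g → GQ g 𝕜) (l : GQ g 𝕜) : Prop :=
  ∀ q : ℕ, ∃ M : Nt g, ∀ n : Nt g, Nt.le g M n → GQ.absLt g (a n) l (g.dpow q)

/-- ρ-moderate over hypersums. -/
def Gauge.SMod (g : Gauge) (A : ℕ → ℝ → 𝕜) : Prop :=
  ∀ N : ℝ → ℕ, g.NMod N → g.Mod fun ε => ∑ n ∈ Finset.range (N ε + 1), A n ε

/-- Hyperseries equivalence of coefficient nets. -/
def Gauge.SEquiv (g : Gauge) (A B : ℕ → ℝ → 𝕜) : Prop :=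
  ∀ N M : ℝ → ℕ, g.NMod N → g.NMod M →
    g.Negl fun ε => ∑ n ∈ Finset.Icc (N ε) (M ε), (A n ε - B n ε)

theorem nat_eq_of_abs_sub_lt_one {a b : ℕ} (h : |(a:ℝ) - b| < 1) : a = b := by
  rcases lt_trichotomy a b with hlt | he | hgt
  · exfalso
    have h1 : (a:ℝ) + 1 ≤ b := by exact_mod_cast Nat.succ_le_of_lt hlt
    have h2 := abs_lt.mp h
    linarith [h2.1]
  · exact he
  · exfalso
    have h1 : (b:ℝ) + 1 ≤ a := by exact_mod_cast Nat.succ_le_of_lt hgt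
    have h2 := abs_lt.mp h
    linarith [h2.2]

theorem natEqEv (g : Gauge) {N M : ℝ → ℕ} (h : g.Negl fun ε => (N ε : ℝ) - M ε) :
    EvS fun ε => N ε = M ε := by
  refine ((h 1).and (g.evs_le (by norm_num : (0:ℝ) < 1/2))).mono fun ε hε hε1 hh => ?_
  obtain ⟨h1, h2⟩ := hh
  apply nat_eq_of_abs_sub_lt_one
  have : ‖(N ε : ℝ) - M ε‖ = |(N ε : ℝ) - M ε| := Real.norm_eq_abs _
  rw [this] at h1
  calc |(N ε:ℝ) - M ε| ≤ g.ρ ε ^ 1 := h1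
    _ = g.ρ ε := pow_one _
    _ ≤ 1/2 := h2
    _ < 1 := by norm_num

/-- Lift a representative-level construction indexed by hypernaturals to ℕ~. -/
def Nt.lift (g : Gauge) (F : (ℝ → ℕ) → ℝ → 𝕜)
    (hmod : ∀ N, g.NMod N → g.Mod (F N))
    (hcong : ∀ N M : ℝ → ℕ, EvS (fun ε => N ε = M ε) → EvS fun ε => F N ε = F M ε) :
    Nt g → GQ g 𝕜 :=
  Quotient.lift (fun N => GQ.mk g (F N.1) (hmod N.1 N.2)) (by
    intro a b hab
    apply Quotient.sound
    exact g.negl_of_evs_eq (hcong a.1 b.1 (natEqEv g hab)))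

def Nt.lift₂ (g : Gauge) (F : (ℝ → ℕ) → (ℝ → ℕ) → ℝ → 𝕜)
    (hmod : ∀ N M, g.NMod N → g.NMod M → g.Mod (F N M))
    (hcong : ∀ N N' M M' : ℝ → ℕ, EvS (fun ε => N ε = N' ε) → EvS (fun ε => M ε = M' ε) →
      EvS fun ε => F N M ε = F N' M' ε) :
    Nt g → Nt g → GQ g 𝕜 :=
  Quotient.lift₂ (fun N M => GQ.mk g (F N.1 M.1) (hmod N.1 M.1 N.2 M.2)) (by
    intro a b a' b' ha hb
    apply Quotient.sound
    exact g.negl_of_evs_eq (hcong a.1 a'.1 b.1 b'.1 (natEqEv g ha) (natEqEv g hb)))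

/-- The hypersequence of partial hypersums N ↦ Σ_{n=0}^{N} a_n. -/
def partialSum (g : Gauge) (A : ℕ → ℝ → 𝕜) (hA : g.SMod A) : Nt g → GQ g 𝕜 :=
  Nt.lift g (fun N ε => ∑ n ∈ Finset.range (N ε + 1), A n ε) (fun N hN => hA N hN)
    (fun N M h => h.mono fun ε _ _ he => by (try simp only []); rw [he])

/-- The hyperseries Σ_{n∈ℕ~} a_n converges to s. -/
def HSConv (g : Gauge) (A : ℕ → ℝ → 𝕜) (hA : g.SMod A) (s : GQ g 𝕜) : Prop :=
  HyperLim g (partialSum g A hA) s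

theorem Gauge.NMod.mono {g : Gauge} {a b : ℝ → ℕ} (hb : g.NMod b) (h : ∀ ε, a ε ≤ b ε) :
    g.NMod a := by
  refine Gauge.Mod.of_norm_le hb fun ε _ _ => ?_
  rw [Real.norm_eq_abs, abs_of_nonneg (Nat.cast_nonneg _), abs_of_nonneg (Nat.cast_nonneg _)]
  exact_mod_cast h ε

theorem Gauge.SMod.range {g : Gauge} {A : ℕ → ℝ → 𝕜} (hA : g.SMod A) {N : ℝ → ℕ}
    (hN : g.NMod N) : g.Mod fun ε => ∑ n ∈ Finset.range (N ε), A n ε := by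
  have hN' : g.NMod fun ε => N ε - 1 := hN.mono fun ε => Nat.sub_le _ _
  obtain ⟨K, hK⟩ := hA _ hN'
  refine ⟨K, hK.mono fun ε hε hε1 h => ?_⟩
  rcases Nat.eq_zero_or_pos (N ε) with h0 | h0
  · show ‖∑ n ∈ Finset.range (N ε), A n ε‖ ≤ _
    rw [h0]
    simp only [Finset.range_zero, Finset.sum_empty, norm_zero]
    exact le_trans (norm_nonneg _) h
  · have he : N ε - 1 + 1 = N ε := Nat.succ_pred_eq_of_pos h0
    show ‖∑ n ∈ Finset.range (N ε), A n ε‖ ≤ _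
    rw [← he]
    exact h

theorem Gauge.SMod.termMod {g : Gauge} {A : ℕ → ℝ → 𝕜} (hA : g.SMod A) {N : ℝ → ℕ}
    (hN : g.NMod N) : g.Mod fun ε => A (N ε) ε := by
  have h := (hA N hN).sub (hA.range hN)
  have heq : (fun ε => (∑ n ∈ Finset.range (N ε + 1), A n ε) -
      ∑ n ∈ Finset.range (N ε), A n ε) = fun ε => A (N ε) ε := by
    funext ε
    rw [Finset.sum_range_succ]
    ring
  rwa [heq] at h

/-- The extension of the terms of a hyperseries to ℕ~ : n ↦ a_n. -/
def GQ.term (g : Gauge) (A : ℕ → ℝ → 𝕜) (hA : g.SMod A) : Nt g → GQ g 𝕜 :=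
  Nt.lift g (fun N ε => A (N ε) ε) (fun _ hN => hA.termMod hN)
    (fun N M h => h.mono fun ε _ _ he => by (try simp only []); rw [he])

theorem norm_sum_Icc_le (A : ℕ → 𝕜) (N M : ℕ) :
    ‖∑ n ∈ Finset.Icc N M, A n‖ ≤
      ‖∑ n ∈ Finset.range (M+1), A n‖ + ‖∑ n ∈ Finset.range N, A n‖ := by
  rcases le_or_gt N (M+1) with h | h
  · have key : (∑ n ∈ Finset.range N, A n) + (∑ n ∈ Finset.Icc N M, A n)
        = ∑ n ∈ Finset.range (M+1), A n := by
      rw [Finset.range_eq_Ico, Finset.range_eq_Ico, ← Finset.Ico_add_one_right_eq_Icc]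
      exact Finset.sum_Ico_consecutive A (Nat.zero_le N) h
    have heq : ∑ n ∈ Finset.Icc N M, A n
        = (∑ n ∈ Finset.range (M+1), A n) - ∑ n ∈ Finset.range N, A n := by
      rw [← key]; ring
    rw [heq]
    exact norm_sub_le _ _
  · rw [Finset.Icc_eq_empty (by omega)]
    simp only [Finset.sum_empty, norm_zero]
    positivity

theorem Gauge.SMod.IccMod {g : Gauge} {A : ℕ → ℝ → 𝕜} (hA : g.SMod A) {N M : ℝ → ℕ}
    (hN : g.NMod N) (hM : g.NMod M) :
    g.Mod fun ε => ∑ n ∈ Finset.Icc (N ε) (M ε), A n ε := by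
  have h1 := (hA M hM).norm
  have h2 := (hA.range hN).norm
  refine Gauge.Mod.of_norm_le (h1.add h2) fun ε _ _ => ?_
  have hnn : (0:ℝ) ≤ ‖∑ n ∈ Finset.range (M ε + 1), A n ε‖ + ‖∑ n ∈ Finset.range (N ε), A n ε‖ :=
    add_nonneg (norm_nonneg _) (norm_nonneg _)
  rw [abs_of_nonneg hnn]
  exact norm_sum_Icc_le _ _ _

/-- The hypersum Σ_{n=N}^{M} a_n as a function of N, M ∈ ℕ~. -/
def hypersum (g : Gauge) (A : ℕ → ℝ → 𝕜) (hA : g.SMod A) : Nt g → Nt g → GQ g 𝕜 :=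
  Nt.lift₂ g (fun N M ε => ∑ n ∈ Finset.Icc (N ε) (M ε), A n ε)
    (fun _ _ hN hM => hA.IccMod hN hM)
    (fun N N' M M' h h' => (h.and h').mono fun ε _ _ he => by
      (try simp only []); rw [he.1, he.2])

theorem Gauge.NMod.add {g : Gauge} {a b : ℝ → ℕ} (ha : g.NMod a) (hb : g.NMod b) :
    g.NMod fun ε => a ε + b ε := by
  have h := Gauge.Mod.add (𝕜 := ℝ) ha hb
  show g.Mod fun ε => ((a ε + b ε : ℕ) : ℝ)
  have heq : (fun ε => ((a ε + b ε : ℕ) : ℝ)) = fun ε => ((a ε : ℝ) + (b ε : ℝ)) := by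
    funext ε; push_cast; ring
  rwa [heq]

/-- Addition on ℕ~. -/
def Nt.add (g : Gauge) : Nt g → Nt g → Nt g :=
  Quotient.lift₂ (fun a b => Nt.mk g (fun ε => a.1 ε + b.1 ε) (a.2.add b.2)) (by
    intro a b a' b' ha hb
    apply Quotient.sound
    have h := ((natEqEv g ha).and (natEqEv g hb))
    exact g.negl_of_evs_eq (h.mono fun ε _ _ he => by
      show ((a.1 ε + b.1 ε : ℕ) : ℝ) = ((a'.1 ε + b'.1 ε : ℕ) : ℝ)
      rw [he.1, he.2]))

/-- Subtraction on generalized numbers. -/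
def GQ.sub (g : Gauge) : GQ g 𝕜 → GQ g 𝕜 → GQ g 𝕜 :=
  Quotient.lift₂ (fun a b => GQ.mk g (fun ε => a.1 ε - b.1 ε) (a.2.sub b.2)) (by
    intro a b a' b' ha hb
    apply Quotient.sound
    show g.Negl _
    have h := Gauge.Negl.sub ha hb
    have heq : (fun ε => (a.1 ε - a'.1 ε) - (b.1 ε - b'.1 ε))
        = fun ε => (a.1 ε - b.1 ε) - (a'.1 ε - b'.1 ε) := by funext ε; ring
    rwa [heq] at h)

/-- Multiplication on generalized numbers. -/
def GQ.mul (g : Gauge) : GQ g 𝕜 → GQ g 𝕜 → GQ g 𝕜 :=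
  Quotient.lift₂ (fun a b => GQ.mk g (fun ε => a.1 ε * b.1 ε) (a.2.mul b.2)) (by
    intro a b a' b' ha hb
    apply Quotient.sound
    show g.Negl _
    have h1 : g.Negl fun ε => (a.1 ε - a'.1 ε) * b.1 ε := Gauge.Negl.mul_mod ha b.2
    have h2 : g.Negl fun ε => (b.1 ε - b'.1 ε) * a'.1 ε := Gauge.Negl.mul_mod hb a'.2
    have h := h1.add h2
    have heq : (fun ε => (a.1 ε - a'.1 ε) * b.1 ε + (b.1 ε - b'.1 ε) * a'.1 ε)
        = fun ε => a.1 ε * b.1 ε - a'.1 ε * b'.1 ε := by funext ε; ring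
    rwa [heq] at h)

/-- The absolute value |·| : ℂ~ → ℝ~. -/
def GQ.abs (g : Gauge) : GQ g 𝕜 → Rt g :=
  Quotient.lift (fun a => GQ.mk g (fun ε => ‖a.1 ε‖) a.2.norm) (by
    intro a b hab
    apply Quotient.sound
    show g.Negl _
    intro q
    refine (hab q).mono fun ε _ _ h => ?_
    show ‖‖a.1 ε‖ - ‖b.1 ε‖‖ ≤ _
    rw [Real.norm_eq_abs]
    exact le_trans (abs_norm_sub_norm_le _ _) h)

/-- Weakly ρ-moderate coefficient nets. -/
def Gauge.WMod (g : Gauge) (a : ℕ → ℝ → ℂ) : Prop :=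
  ∃ Q R : ℕ, EvS fun ε => ∀ n : ℕ, ‖a n ε‖ ≤ g.ρ ε ^ (-((n * Q + R : ℕ) : ℤ))

/-- Strong ρ-equivalence of coefficient nets. -/
def Gauge.StrEquiv (g : Gauge) (a b : ℕ → ℝ → ℂ) : Prop :=
  ∀ q r : ℕ, EvS fun ε => ∀ n : ℕ, ‖a n ε - b n ε‖ ≤ g.ρ ε ^ (n * q + r)

/-- The net of radii of convergence r_ε = (limsup_n |a_{nε}|^{1/n})⁻¹ ∈ [0,∞]. -/
def radNet (a : ℕ → ℝ → ℂ) (ε : ℝ) : ENNReal :=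
  (Filter.limsup (fun n : ℕ => ENNReal.ofReal (‖a n ε‖ ^ ((n : ℝ)⁻¹))) Filter.atTop)⁻¹

/-- Condition (i): |z − c| < rad (a_n)_c, as classes (via representatives). -/
def RadLt (g : Gauge) (a : ℕ → ℝ → ℂ) (z c : Ct g) : Prop :=
  ∃ zr cr : ℝ → ℂ, ∃ a' : ℕ → ℝ → ℂ, IsRep g zr z ∧ IsRep g cr c ∧
    g.WMod a' ∧ g.StrEquiv a a' ∧
    ∃ m : ℕ, EvS fun ε => ENNReal.ofReal (‖zr ε - cr ε‖ + g.ρ ε ^ m) ≤ radNet a' ε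

/-- The coefficient net of the hyper-power series Σ a_n (z−c)^n. -/
def PSeriesNet (a : ℕ → ℝ → ℂ) (zr cr : ℝ → ℂ) : ℕ → ℝ → ℂ :=
  fun n ε => a n ε * (zr ε - cr ε) ^ n

/-- Conditions (ii)-(iv) of the definition of the set of convergence, for given
representatives. -/
def ConvConds (g : Gauge) (a : ℕ → ℝ → ℂ) (zr cr : ℝ → ℂ) (z : Ct g) : Prop :=
  ∃ hS : g.SMod (PSeriesNet a zr cr),
    (EvS fun ε => Summable fun n : ℕ => PSeriesNet a zr cr n ε) ∧
    (∃ hm : g.Mod fun ε => ∑' n : ℕ, PSeriesNet a zr cr n ε,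
      HyperLim g (partialSum g _ hS) (GQ.mk g _ hm)) ∧
    (∀ zr' : ℝ → ℂ, IsRep g zr' z →
      (EvS fun ε => Summable fun n : ℕ => (n : ℂ) * a n ε * (zr' ε - cr ε) ^ (n - 1)) ∧
      g.Mod fun ε => ∑' n : ℕ, (n : ℂ) * a n ε * (zr' ε - cr ε) ^ (n - 1))

/-- The set of convergence σ((a_n)_c, c) of a hyper-power series. -/
def convSet (g : Gauge) (a : ℕ → ℝ → ℂ) (c : Ct g) : Set (Ct g) :=
  { z | RadLt g a z c ∧
      ∃ zr cr : ℝ → ℂ, ∃ a' : ℕ → ℝ → ℂ, IsRep g zr z ∧ IsRep g cr c ∧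
        g.WMod a' ∧ g.StrEquiv a a' ∧ ConvConds g a' zr cr z }

/-- Sharply open subsets of ℂ~. -/
def SharplyOpen (g : Gauge) (U : Set (Ct g)) : Prop :=
  ∀ z ∈ U, ∃ r : Rt g, Rt.lt g (GQ.zero g ℝ) r ∧ ∀ w : Ct g, GQ.absLt g w z r → w ∈ U

/-- `P ε` for all small ε in L. -/
def EvSOn (L : Set ℝ) (P : ℝ → Prop) : Prop :=
  ∃ ε₀ : ℝ, 0 < ε₀ ∧ ε₀ ≤ 1 ∧ ∀ ε ∈ L, 0 < ε → ε ≤ ε₀ → P ε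

/-- x ∈ ℂ~ is invertible on the subpoint L. -/
def GQ.InvertibleOn (g : Gauge) {𝕜 : Type} [RCLike 𝕜] (L : Set ℝ) (x : GQ g 𝕜) : Prop :=
  ∃ a : {u : ℝ → 𝕜 // g.Mod u}, Quotient.mk (gSetoid g 𝕜) a = x ∧
    ∃ m : ℕ, EvSOn L fun ε => g.ρ ε ^ m ≤ ‖a.1 ε‖

theorem Gauge.nmod_const (g : Gauge) (c : ℕ) : g.NMod fun _ => c := by
  refine ⟨c + 1, (g.evs_le (by positivity : (0:ℝ) < 1/(c+1))).mono fun ε hε hε1 h3 => ?_⟩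
  have hρ := g.pos ε hε hε1
  show ‖((c:ℕ) : ℝ)‖ ≤ _
  rw [Real.norm_eq_abs, abs_of_nonneg (Nat.cast_nonneg _)]
  have hc1 : (0:ℝ) < (c:ℝ) + 1 := by positivity
  calc (c:ℝ) ≤ 1 / g.ρ ε := by
        rw [le_div_iff₀ hρ]
        calc (c:ℝ) * g.ρ ε ≤ (c:ℝ) * (1/(c+1)) :=
              mul_le_mul_of_nonneg_left h3 (Nat.cast_nonneg c)
          _ ≤ 1 := by rw [mul_one_div, div_le_one hc1]; linarith
    _ = g.ρ ε ^ (-((1:ℕ):ℤ)) := by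
        rw [show (-((1:ℕ):ℤ)) = (-1:ℤ) by norm_num, zpow_neg_one, one_div]
    _ ≤ g.ρ ε ^ (-((c+1:ℕ):ℤ)) := g.zpow_neg_le hε hε1 (by omega)

theorem Gauge.SMod.shift {g : Gauge} {𝕜 : Type} [RCLike 𝕜] {A : ℕ → ℝ → 𝕜}
    (hA : g.SMod A) (N₀ : ℕ) : g.SMod fun n ε => A (n + N₀) ε := by
  intro K hK
  have h1 := hA (fun ε => N₀ + K ε) ((g.nmod_const N₀).add hK)
  have h2 := hA.range (g.nmod_const N₀)
  have h := h1.sub h2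
  have heq : (fun ε => (∑ n ∈ Finset.range (N₀ + K ε + 1), A n ε) -
      ∑ n ∈ Finset.range N₀, A n ε) = fun ε => ∑ n ∈ Finset.range (K ε + 1), A (n + N₀) ε := by
    funext ε
    have e1 : (∑ n ∈ Finset.range N₀, A n ε) + (∑ n ∈ Finset.Ico N₀ (N₀ + K ε + 1), A n ε)
        = ∑ n ∈ Finset.range (N₀ + K ε + 1), A n ε :=
      Finset.sum_range_add_sum_Ico _ (by omega)
    have e2 : ∑ n ∈ Finset.Ico N₀ (N₀ + K ε + 1), A n ε
        = ∑ n ∈ Finset.range (K ε + 1), A (N₀ + n) ε := by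
      rw [Finset.sum_Ico_eq_sum_range, show N₀ + K ε + 1 - N₀ = K ε + 1 by omega]
    rw [← e1, e2]
    rw [add_sub_cancel_left]
    exact Finset.sum_congr rfl fun n _ => by rw [Nat.add_comm]
  rwa [heq] at h

section AbelHelpers

variable {𝕜 : Type} [RCLike 𝕜]

theorem rep_negl (g : Gauge) {x x' : ℝ → 𝕜} {z : GQ g 𝕜} (h : IsRep g x z) (h' : IsRep g x' z) :
    g.Negl fun ε => x ε - x' ε := by
  obtain ⟨hm, e⟩ := h; obtain ⟨hm', e'⟩ := h'
  exact Quotient.exact (e.trans e'.symm)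

theorem absSub_rep (g : Gauge) {zh c : Ct g} {zhr cr : ℝ → ℂ}
    (hzh : IsRep g zhr zh) (hc : IsRep g cr c) :
    ∃ hm : g.Mod fun ε => ‖zhr ε - cr ε‖,
      GQ.mk g (fun ε => ‖zhr ε - cr ε‖) hm = GQ.abs g (GQ.sub g zh c) := by
  obtain ⟨h1, e1⟩ := hzh; obtain ⟨h2, e2⟩ := hc
  exact ⟨(h1.sub h2).norm, by rw [← e1, ← e2]; rfl⟩

theorem absLt_est {g : Gauge} {z w : GQ g 𝕜} {r : Rt g} (h : GQ.absLt g z w r)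
    {zr wr : ℝ → 𝕜} {rr : ℝ → ℝ} (hz : IsRep g zr z) (hw : IsRep g wr w)
    {hrm : g.Mod rr} (hr : GQ.mk g rr hrm = r) :
    ∃ m : ℕ, EvS fun ε => ‖zr ε - wr ε‖ + g.ρ ε ^ m ≤ rr ε := by
  obtain ⟨A, B, U, ea, eb, eu, m, hev⟩ := h
  have na : g.Negl fun ε => A.1 ε - zr ε := by
    obtain ⟨hm, e⟩ := hz
    exact Quotient.exact (ea.trans e.symm)
  have nb : g.Negl fun ε => B.1 ε - wr ε := by
    obtain ⟨hm, e⟩ := hw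
    exact Quotient.exact (eb.trans e.symm)
  have nu : g.Negl fun ε => U.1 ε - rr ε := Quotient.exact (eu.trans hr.symm)
  refine ⟨m + 1, ((((hev.and (na (m+2))).and (nb (m+2))).and (nu (m+2))).and
    (g.evs_le (show (0:ℝ) < 1/4 by norm_num))).mono fun ε hε hε1 hh => ?_⟩
  obtain ⟨⟨⟨⟨h1, h2⟩, h3⟩, h4⟩, h5⟩ := hh
  have hρ := g.pos ε hε hε1
  have t1 : ‖zr ε - wr ε‖ ≤ ‖zr ε - A.1 ε‖ + ‖A.1 ε - B.1 ε‖ + ‖B.1 ε - wr ε‖ := by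
    simpa [dist_eq_norm] using dist_triangle4 (zr ε) (A.1 ε) (B.1 ε) (wr ε)
  have h2' : ‖zr ε - A.1 ε‖ ≤ g.ρ ε ^ (m+2) := by
    rw [norm_sub_rev]; exact h2
  have h3' : ‖B.1 ε - wr ε‖ ≤ g.ρ ε ^ (m+2) := h3
  have h4' : U.1 ε - rr ε ≤ g.ρ ε ^ (m+2) := by
    have h4'' : ‖U.1 ε - rr ε‖ ≤ g.ρ ε ^ (m+2) := h4
    rw [Real.norm_eq_abs] at h4''
    exact (abs_le.mp h4'').2
  have am : (0:ℝ) ≤ g.ρ ε ^ m := pow_nonneg hρ.le m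
  have e1 : g.ρ ε ^ (m+1) ≤ g.ρ ε ^ m * (1/4) := by
    rw [pow_succ]
    exact mul_le_mul_of_nonneg_left h5 am
  have e2 : g.ρ ε ^ (m+2) ≤ g.ρ ε ^ m * (1/16) := by
    have hq : g.ρ ε ^ 2 ≤ 1/16 := by nlinarith [hρ.le]
    calc g.ρ ε ^ (m+2) = g.ρ ε ^ m * g.ρ ε ^ 2 := by rw [pow_add]
      _ ≤ g.ρ ε ^ m * (1/16) := mul_le_mul_of_nonneg_left hq am
  linarith

theorem geom_tail (q N₀ B : ℕ) {ρ K u : ℝ} (hρ0 : 0 < ρ) (hρ1 : ρ ≤ 1)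
    (hK0 : 0 ≤ K) (hK : K ≤ ρ ^ (-(N₀:ℤ))) (hu0 : 0 ≤ u) (huB : u + ρ ^ B ≤ 1)
    {N : ℕ} (hN : ((q+2+N₀+B : ℕ):ℝ) * Real.log (1/ρ) * (ρ ^ B)⁻¹ ≤ (N:ℝ)) :
    K * u ^ N * (1 - u)⁻¹ ≤ ρ ^ (q + 2) := by
  set C := q + 2 + N₀ + B with hC
  have hρB : 0 < ρ ^ B := pow_pos hρ0 B
  have hu1 : u < 1 := by linarith
  have h1u : 0 < 1 - u := by linarith
  have hlog : (C:ℝ) * Real.log (1/ρ) ≤ (N:ℝ) * ρ ^ B := by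
    have h := mul_le_mul_of_nonneg_right hN hρB.le
    rwa [mul_assoc, inv_mul_cancel₀ hρB.ne', mul_one] at h
  have huexp : u ≤ Real.exp (-(ρ^B)) := by
    have := Real.add_one_le_exp (-(ρ^B)); linarith
  have hupow : u ^ N ≤ Real.exp (-(ρ^B)) ^ N := pow_le_pow_left₀ hu0 huexp N
  have hexp : Real.exp (-(ρ^B)) ^ N = Real.exp (-((N:ℝ) * ρ^B)) := by
    rw [← Real.exp_nat_mul]; ring_nf
  have hfin : Real.exp (-((N:ℝ) * ρ^B)) ≤ ρ ^ C := by
    have hρC : ρ ^ C = Real.exp ((C:ℝ) * Real.log ρ) := by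
      rw [Real.exp_nat_mul, Real.exp_log hρ0]
    rw [hρC]
    apply Real.exp_le_exp.2
    have hli : Real.log (1/ρ) = -Real.log ρ := by rw [one_div, Real.log_inv]
    rw [hli] at hlog
    linarith
  have huN : u ^ N ≤ ρ ^ C := le_trans hupow (le_trans (le_of_eq hexp) hfin)
  have hinv : (1-u)⁻¹ ≤ (ρ^B)⁻¹ := by
    apply inv_anti₀ hρB; linarith
  calc K * u ^ N * (1-u)⁻¹ ≤ ρ^(-(N₀:ℤ)) * ρ ^ C * (ρ^B)⁻¹ := by
        apply mul_le_mul (mul_le_mul hK huN (pow_nonneg hu0 N) (zpow_nonneg hρ0.le _)) hinv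
          (inv_nonneg.2 h1u.le) (by positivity)
    _ = ρ ^ (q+2) := by
        rw [← zpow_natCast ρ C, ← zpow_natCast ρ B, ← zpow_neg, ← zpow_add₀ hρ0.ne',
          ← zpow_add₀ hρ0.ne', ← zpow_natCast ρ (q+2)]
        congr 1
        push_cast [hC]
        ring

theorem geom_pt {K u : ℝ} {A : ℕ → 𝕜} (hK0 : 0 ≤ K) (hu0 : 0 ≤ u) (hu1 : u < 1)
    (hA : ∀ n, ‖A n‖ ≤ K * u ^ n) :
    Summable A ∧ (∀ k : ℕ, ‖∑ n ∈ Finset.range k, A n‖ ≤ K * (1-u)⁻¹) ∧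
      ‖∑' n : ℕ, A n‖ ≤ K * (1-u)⁻¹ ∧
      ∀ k : ℕ, ‖(∑ n ∈ Finset.range k, A n) - ∑' n : ℕ, A n‖ ≤ K * u ^ k * (1-u)⁻¹ := by
  have hg : Summable fun n : ℕ => u ^ n := summable_geometric_of_lt_one hu0 hu1
  have hKg : Summable fun n : ℕ => K * u ^ n := hg.mul_left K
  have hSA : Summable A := Summable.of_norm_bounded hKg hA
  have hnorm : Summable fun n : ℕ => ‖A n‖ :=
    Summable.of_nonneg_of_le (fun n => norm_nonneg _) hA hKg
  have htg : ∑' n : ℕ, u ^ n = (1-u)⁻¹ := tsum_geometric_of_lt_one hu0 hu1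
  have htK : ∑' n : ℕ, K * u ^ n = K * (1-u)⁻¹ := by rw [tsum_mul_left, htg]
  have hnn : ∀ n : ℕ, (0:ℝ) ≤ K * u ^ n := fun n => mul_nonneg hK0 (pow_nonneg hu0 n)
  refine ⟨hSA, fun k => ?_, ?_, fun k => ?_⟩
  · calc ‖∑ n ∈ Finset.range k, A n‖ ≤ ∑ n ∈ Finset.range k, ‖A n‖ := norm_sum_le _ _
      _ ≤ ∑ n ∈ Finset.range k, K * u ^ n := Finset.sum_le_sum fun n _ => hA n
      _ ≤ ∑' n : ℕ, K * u ^ n := Summable.sum_le_tsum _ (fun n _ => hnn n) hKg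
      _ = K * (1-u)⁻¹ := htK
  · calc ‖∑' n : ℕ, A n‖ ≤ ∑' n : ℕ, ‖A n‖ := norm_tsum_le_tsum_norm hnorm
      _ ≤ ∑' n : ℕ, K * u ^ n := Summable.tsum_le_tsum hA hnorm hKg
      _ = K * (1-u)⁻¹ := htK
  · have key := Summable.sum_add_tsum_nat_add k hSA (f := A)
    have hd : (∑ n ∈ Finset.range k, A n) - ∑' n : ℕ, A n = -(∑' i : ℕ, A (i + k)) := by
      rw [← key]; ring
    rw [hd, norm_neg]
    have hsh : Summable fun i : ℕ => A (i + k) := (summable_nat_add_iff k).2 hSA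
    have hshn : Summable fun i : ℕ => ‖A (i + k)‖ := (summable_nat_add_iff k).2 hnorm
    have hshK : Summable fun i : ℕ => K * u ^ k * u ^ i := (hg.mul_left _)
    calc ‖∑' i : ℕ, A (i + k)‖ ≤ ∑' i : ℕ, ‖A (i + k)‖ := norm_tsum_le_tsum_norm hshn
      _ ≤ ∑' i : ℕ, K * u ^ k * u ^ i := by
          refine Summable.tsum_le_tsum (fun i => ?_) hshn hshK
          calc ‖A (i + k)‖ ≤ K * u ^ (i + k) := hA _
            _ = K * u ^ k * u ^ i := by rw [pow_add]; ring
      _ = K * u ^ k * (1-u)⁻¹ := by rw [tsum_mul_left, htg]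

end AbelHelpers
section GeomMain

variable {𝕜 : Type} [RCLike 𝕜]

/-- Bound K * (1-u)⁻¹ ≤ ρ^{-(N₀+B)} under the standard hypotheses. -/
theorem Ku_bound {ρ K u : ℝ} (N₀ B : ℕ) (hρ0 : 0 < ρ)
    (hK0 : 0 ≤ K) (hK : K ≤ ρ ^ (-(N₀:ℤ))) (hu0 : 0 ≤ u) (huB : u + ρ ^ B ≤ 1) :
    K * (1 - u)⁻¹ ≤ ρ ^ (-((N₀ + B : ℕ):ℤ)) := by
  have hρB : 0 < ρ ^ B := pow_pos hρ0 B
  have h1u : 0 < 1 - u := by linarith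
  have hinv : (1-u)⁻¹ ≤ (ρ^B)⁻¹ := by apply inv_anti₀ hρB; linarith
  calc K * (1-u)⁻¹ ≤ ρ ^ (-(N₀:ℤ)) * (ρ^B)⁻¹ :=
        mul_le_mul hK hinv (inv_nonneg.2 h1u.le) (zpow_nonneg hρ0.le _)
    _ = ρ ^ (-((N₀ + B : ℕ):ℤ)) := by
        rw [← zpow_natCast ρ B, ← zpow_neg, ← zpow_add₀ hρ0.ne']
        congr 1; push_cast; ring

theorem geom_main (g : Gauge) (A : ℕ → ℝ → 𝕜) (K u : ℝ → ℝ) (N₀ B : ℕ)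
    (h : EvS fun ε => 0 ≤ K ε ∧ K ε ≤ g.ρ ε ^ (-(N₀:ℤ)) ∧ 0 ≤ u ε ∧
      u ε + g.ρ ε ^ B ≤ 1 ∧ ∀ n : ℕ, ‖A n ε‖ ≤ K ε * u ε ^ n) :
    ∃ hS : g.SMod A, (EvS fun ε => Summable fun n : ℕ => A n ε) ∧
      ∃ hm : g.Mod fun ε => ∑' n : ℕ, A n ε,
        HyperLim g (partialSum g A hS) (GQ.mk g (fun ε => ∑' n : ℕ, A n ε) hm) := by
  have hu1 : ∀ ε, 0 < ε → ε ≤ 1 → u ε + g.ρ ε ^ B ≤ 1 → u ε < 1 := by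
    intro ε hε hε1 hb
    have := pow_pos (g.pos ε hε hε1) B
    linarith
  have hS : g.SMod A := by
    intro N hN
    refine ⟨N₀ + B, h.mono fun ε hε hε1 hh => ?_⟩
    obtain ⟨hK0, hK, hu0, huB, hA⟩ := hh
    have hpt := geom_pt hK0 hu0 (hu1 ε hε hε1 huB) hA
    exact le_trans (hpt.2.1 _) (Ku_bound N₀ B (g.pos ε hε hε1) hK0 hK hu0 huB)
  have hsumm : EvS fun ε => Summable fun n : ℕ => A n ε :=
    h.mono fun ε hε hε1 hh =>
      (geom_pt hh.1 hh.2.2.1 (hu1 ε hε hε1 hh.2.2.2.1) hh.2.2.2.2).1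
  have hm : g.Mod fun ε => ∑' n : ℕ, A n ε := by
    refine ⟨N₀ + B, h.mono fun ε hε hε1 hh => ?_⟩
    obtain ⟨hK0, hK, hu0, huB, hA⟩ := hh
    have hpt := geom_pt hK0 hu0 (hu1 ε hε hε1 huB) hA
    exact le_trans hpt.2.2.1 (Ku_bound N₀ B (g.pos ε hε hε1) hK0 hK hu0 huB)
  refine ⟨hS, hsumm, hm, ?_⟩
  intro q
  set C : ℕ := q + 2 + N₀ + B with hCdef
  set Nf : ℝ → ℕ := fun ε => ⌈(C:ℝ) * Real.log (1 / g.ρ ε) * (g.ρ ε ^ B)⁻¹⌉₊ with hNf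
  have hNfmod : g.NMod Nf := by
    refine ⟨B + 2, (g.evs_le (show (0:ℝ) < 1/((C:ℝ)+1) by positivity)).mono
      fun ε hε hε1 h5 => ?_⟩
    have hρ := g.pos ε hε hε1
    have hρ1 := g.le_one ε hε hε1
    have hρB : 0 < g.ρ ε ^ B := pow_pos hρ B
    have hl0 : 0 ≤ Real.log (1 / g.ρ ε) := by
      apply Real.log_nonneg
      rw [le_div_iff₀ hρ]; linarith
    have hl1 : Real.log (1 / g.ρ ε) ≤ 1 / g.ρ ε := by
      have := Real.log_le_sub_one_of_pos (show (0:ℝ) < 1 / g.ρ ε by positivity)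
      linarith
    have hx0 : 0 ≤ (C:ℝ) * Real.log (1 / g.ρ ε) * (g.ρ ε ^ B)⁻¹ := by positivity
    have hceil : (Nf ε : ℝ) ≤ (C:ℝ) * Real.log (1 / g.ρ ε) * (g.ρ ε ^ B)⁻¹ + 1 :=
      (Nat.ceil_lt_add_one hx0).le
    set y : ℝ := (g.ρ ε ^ (B+1))⁻¹ with hy
    have hyval : (1 / g.ρ ε) * (g.ρ ε ^ B)⁻¹ = y := by
      rw [hy, pow_succ, mul_inv, one_div]; ring
    have hy1 : 1 ≤ y := by
      rw [hy]
      rw [one_le_inv_iff₀]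
      exact ⟨pow_pos hρ _, pow_le_one₀ hρ.le hρ1⟩
    have hx1 : (C:ℝ) * Real.log (1 / g.ρ ε) * (g.ρ ε ^ B)⁻¹ ≤ (C:ℝ) * y := by
      rw [← hyval, mul_assoc]
      exact mul_le_mul_of_nonneg_left
        (mul_le_mul_of_nonneg_right hl1 (inv_nonneg.2 hρB.le)) (Nat.cast_nonneg C)
    have hC1 : (C:ℝ) + 1 ≤ (g.ρ ε)⁻¹ := by
      rw [le_inv_comm₀ (by positivity) hρ]
      rwa [inv_eq_one_div]
    have hfin : (Nf ε : ℝ) ≤ g.ρ ε ^ (-((B+2:ℕ):ℤ)) := by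
      have e1 : g.ρ ε ^ (-((B+2:ℕ):ℤ)) = (g.ρ ε)⁻¹ * y := by
        rw [hy, zpow_neg, zpow_natCast, pow_succ, mul_inv]
        ring
      calc (Nf ε : ℝ) ≤ (C:ℝ) * y + 1 := le_trans hceil (by linarith)
        _ ≤ ((C:ℝ) + 1) * y := by nlinarith
        _ ≤ (g.ρ ε)⁻¹ * y := mul_le_mul_of_nonneg_right hC1 (by linarith)
        _ = g.ρ ε ^ (-((B+2:ℕ):ℤ)) := e1.symm
    show ‖((Nf ε : ℕ) : ℝ)‖ ≤ _
    rw [Real.norm_eq_abs, abs_of_nonneg (Nat.cast_nonneg _)]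
    exact hfin
  refine ⟨Nt.mk g Nf hNfmod, ?_⟩
  intro n hn
  obtain ⟨A₁, B₁, eA₁, eB₁, hle⟩ := hn
  have hNB : EvS fun ε => Nf ε ≤ B₁.1 ε := by
    have hAeq : EvS fun ε => A₁.1 ε = Nf ε := natEqEv g (Quotient.exact eA₁)
    exact (hAeq.and hle).mono fun ε _ _ hh => hh.1 ▸ hh.2
  refine ⟨⟨fun ε => ∑ k ∈ Finset.range (B₁.1 ε + 1), A k ε, hS B₁.1 B₁.2⟩,
    ⟨fun ε => ∑' k : ℕ, A k ε, hm⟩, ⟨fun ε => g.ρ ε ^ q, g.mod_pow q⟩,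
    by rw [← eB₁]; rfl, rfl, rfl, q + 1, ?_⟩
  refine (((h.and hNB).and (g.evs_le (show (0:ℝ) < 1/2 by norm_num))).mono
    fun ε hε hε1 hh => ?_)
  obtain ⟨⟨⟨hK0, hK, hu0, huB, hA⟩, hNle⟩, hhalf⟩ := hh
  have hρ := g.pos ε hε hε1
  have hρ1 := g.le_one ε hε hε1
  have hu1' : u ε < 1 := hu1 ε hε hε1 huB
  have hpt := geom_pt hK0 hu0 hu1' hA
  have htail := hpt.2.2.2 (B₁.1 ε + 1)
  have hmono : u ε ^ (B₁.1 ε + 1) ≤ u ε ^ (Nf ε) :=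
    pow_le_pow_of_le_one hu0 hu1'.le (by omega)
  have hN : (C:ℝ) * Real.log (1 / g.ρ ε) * (g.ρ ε ^ B)⁻¹ ≤ (Nf ε : ℝ) := Nat.le_ceil _
  have hgt := geom_tail q N₀ B hρ hρ1 hK0 hK hu0 huB hN
  have h1u : (0:ℝ) ≤ (1 - u ε)⁻¹ := by
    have : 0 < 1 - u ε := by linarith
    positivity
  have hstep : ‖(∑ k ∈ Finset.range (B₁.1 ε + 1), A k ε) - ∑' k : ℕ, A k ε‖
      ≤ g.ρ ε ^ (q+2) := by
    refine le_trans htail (le_trans ?_ hgt)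
    apply mul_le_mul_of_nonneg_right _ h1u
    exact mul_le_mul_of_nonneg_left hmono hK0
  have hfin : g.ρ ε ^ (q+2) + g.ρ ε ^ (q+1) ≤ g.ρ ε ^ q := by
    have hq : (0:ℝ) ≤ g.ρ ε ^ q := pow_nonneg hρ.le q
    have h3 : g.ρ ε * g.ρ ε + g.ρ ε ≤ 1 := by nlinarith
    calc g.ρ ε ^ (q+2) + g.ρ ε ^ (q+1) = g.ρ ε ^ q * (g.ρ ε * g.ρ ε + g.ρ ε) := by ring
      _ ≤ g.ρ ε ^ q * 1 := mul_le_mul_of_nonneg_left h3 hq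
      _ = g.ρ ε ^ q := mul_one _
  show ‖(∑ k ∈ Finset.range (B₁.1 ε + 1), A k ε) - ∑' k : ℕ, A k ε‖ + g.ρ ε ^ (q+1)
    ≤ g.ρ ε ^ q
  linarith

end GeomMain
section DerivMain

theorem nmul_geom {u : ℝ} (hu0 : 0 ≤ u) (hu1 : u < 1) :
    Summable (fun n : ℕ => (n:ℝ) * u ^ (n-1)) ∧
      ∑' n : ℕ, (n:ℝ) * u ^ (n-1) ≤ 2 * ((1-u)⁻¹)^2 := by
  have hn : ‖u‖ < 1 := by rwa [Real.norm_eq_abs, abs_of_nonneg hu0]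
  have h1u : 0 < 1 - u := by linarith
  have s1 : Summable fun n : ℕ => (n:ℝ) * u ^ n := by
    have := summable_pow_mul_geometric_of_norm_lt_one 1 hn
    simpa using this
  have s0 : Summable fun n : ℕ => u ^ n := summable_geometric_of_lt_one hu0 hu1
  have s2 : Summable fun n : ℕ => ((n:ℝ)+1) * u ^ n := by
    have := s1.add s0
    have he : (fun n : ℕ => (n:ℝ) * u ^ n + u ^ n) = fun n : ℕ => ((n:ℝ)+1) * u ^ n := by
      funext n; ring
    rwa [he] at this
  have hshift : (fun n : ℕ => (((n+1:ℕ)):ℝ) * u ^ ((n+1)-1)) = fun n : ℕ => ((n:ℝ)+1) * u ^ n := by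
    funext n
    push_cast
    norm_num
  have sf : Summable (fun n : ℕ => (n:ℝ) * u ^ (n-1)) := by
    apply (summable_nat_add_iff 1).1
    rw [show (fun n : ℕ => ((n + 1 : ℕ):ℝ) * u ^ ((n+1) - 1)) = fun n : ℕ => ((n:ℝ)+1) * u ^ n
      from hshift]
    exact s2
  refine ⟨sf, ?_⟩
  have hval : ∑' n : ℕ, (n:ℝ) * u ^ (n-1) = ∑' n : ℕ, ((n:ℝ)+1) * u ^ n := by
    rw [Summable.tsum_eq_zero_add sf]
    simp only [Nat.cast_zero, zero_mul, zero_add]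
    apply tsum_congr
    intro n
    push_cast
    norm_num
  have hsplit : ∑' n : ℕ, ((n:ℝ)+1) * u ^ n
      = (∑' n : ℕ, (n:ℝ) * u ^ n) + ∑' n : ℕ, u ^ n := by
    rw [← Summable.tsum_add s1 s0]
    apply tsum_congr; intro n; ring
  have t1 : ∑' n : ℕ, (n:ℝ) * u ^ n = u / (1-u)^2 :=
    tsum_coe_mul_geometric_of_norm_lt_one hn
  have t0 : ∑' n : ℕ, u ^ n = (1-u)⁻¹ := tsum_geometric_of_lt_one hu0 hu1
  rw [hval, hsplit, t1, t0]
  have b1 : u / (1-u)^2 ≤ ((1-u)⁻¹)^2 := by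
    rw [div_le_iff₀ (by positivity)]
    calc u ≤ 1 := hu1.le
      _ = ((1-u)⁻¹)^2 * (1-u)^2 := by
          rw [← mul_pow, inv_mul_cancel₀ h1u.ne']; norm_num
  have b0 : (1-u)⁻¹ ≤ ((1-u)⁻¹)^2 := by
    have hi : 1 ≤ (1-u)⁻¹ := by
      rw [one_le_inv_iff₀]; constructor <;> linarith
    calc (1-u)⁻¹ = (1-u)⁻¹ * 1 := by ring
      _ ≤ (1-u)⁻¹ * (1-u)⁻¹ := mul_le_mul_of_nonneg_left hi (by positivity)
      _ = ((1-u)⁻¹)^2 := by ring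
  linarith

theorem deriv_main (g : Gauge) (a' : ℕ → ℝ → ℂ) (K r : ℝ → ℝ) (x : ℝ → ℂ) (N₀ B R₁ : ℕ)
    (h : EvS fun ε => 0 ≤ K ε ∧ K ε ≤ g.ρ ε ^ (-(N₀:ℤ)) ∧ 0 < r ε ∧
      r ε ≤ g.ρ ε ^ (-(R₁:ℤ)) ∧ (∀ n : ℕ, ‖a' n ε‖ * r ε ^ n ≤ K ε) ∧
      ‖x ε‖ + g.ρ ε ^ B ≤ r ε) :
    (EvS fun ε => Summable fun n : ℕ => (n : ℂ) * a' n ε * x ε ^ (n - 1)) ∧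
      g.Mod fun ε => ∑' n : ℕ, (n : ℂ) * a' n ε * x ε ^ (n - 1) := by
  -- pointwise facts on good ε
  have key : ∀ ε, 0 < ε → ε ≤ 1 →
      (0 ≤ K ε ∧ K ε ≤ g.ρ ε ^ (-(N₀:ℤ)) ∧ 0 < r ε ∧ r ε ≤ g.ρ ε ^ (-(R₁:ℤ)) ∧
        (∀ n : ℕ, ‖a' n ε‖ * r ε ^ n ≤ K ε) ∧ ‖x ε‖ + g.ρ ε ^ B ≤ r ε) →
      (Summable fun n : ℕ => (n : ℂ) * a' n ε * x ε ^ (n - 1)) ∧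
        ‖∑' n : ℕ, (n : ℂ) * a' n ε * x ε ^ (n - 1)‖
          ≤ K ε * (r ε)⁻¹ * (2 * ((g.ρ ε ^ (B + R₁))⁻¹)^2) := by
    intro ε hε hε1 hh
    obtain ⟨hK0, hK, hr0, hrR, hbd, hxr⟩ := hh
    have hρ := g.pos ε hε hε1
    set u : ℝ := ‖x ε‖ / r ε with hu
    have hρB : 0 < g.ρ ε ^ B := pow_pos hρ B
    have hu0 : 0 ≤ u := div_nonneg (norm_nonneg _) hr0.le
    have hxu : ‖x ε‖ = u * r ε := by rw [hu, div_mul_cancel₀ _ hr0.ne']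
    have hinvr : g.ρ ε ^ R₁ ≤ (r ε)⁻¹ := by
      have h1 : (g.ρ ε ^ (-(R₁:ℤ)))⁻¹ ≤ (r ε)⁻¹ := inv_anti₀ hr0 hrR
      rwa [zpow_neg, inv_inv, zpow_natCast] at h1
    have h1u : g.ρ ε ^ (B + R₁) ≤ 1 - u := by
      have e1 : 1 - u = (r ε - ‖x ε‖) / r ε := by
        rw [hu]; field_simp
      have e2 : g.ρ ε ^ B ≤ r ε - ‖x ε‖ := by linarith
      calc g.ρ ε ^ (B + R₁) = g.ρ ε ^ B * g.ρ ε ^ R₁ := pow_add _ _ _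
        _ ≤ (r ε - ‖x ε‖) * (r ε)⁻¹ :=
            mul_le_mul e2 hinvr (pow_nonneg hρ.le _) (by linarith)
        _ = 1 - u := by rw [e1, div_eq_mul_inv]
    have hu1 : u < 1 := by
      have := pow_pos hρ (B + R₁)
      linarith
    have hterm : ∀ n : ℕ, ‖(n : ℂ) * a' n ε * x ε ^ (n - 1)‖
        ≤ K ε * (r ε)⁻¹ * ((n:ℝ) * u ^ (n-1)) := by
      intro n
      match n with
      | 0 => simp
      | Nat.succ m =>
        have han : ‖a' (m+1) ε‖ ≤ K ε / r ε ^ (m+1) := by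
          rw [le_div_iff₀ (pow_pos hr0 _)]
          exact hbd (m+1)
        have e0 : ‖(((m+1):ℕ) : ℂ) * a' (m+1) ε * x ε ^ ((m+1) - 1)‖
            = ((m+1:ℕ):ℝ) * ‖a' (m+1) ε‖ * ‖x ε‖ ^ m := by
          rw [norm_mul, norm_mul, norm_pow, Complex.norm_natCast]
          norm_num
        rw [e0]
        have hb : ((m+1:ℕ):ℝ) * ‖a' (m+1) ε‖ * ‖x ε‖ ^ m
            ≤ ((m+1:ℕ):ℝ) * (K ε / r ε ^ (m+1)) * (u * r ε) ^ m := by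
          rw [← hxu]
          apply mul_le_mul_of_nonneg_right _ (pow_nonneg (norm_nonneg _) m)
          exact mul_le_mul_of_nonneg_left han (Nat.cast_nonneg _)
        refine le_trans hb (le_of_eq ?_)
        rw [mul_pow]
        have e1 : ((m+1:ℕ):ℝ) * u ^ ((m+1)-1) = ((m+1:ℕ):ℝ) * u ^ m := by norm_num
        rw [e1]
        field_simp
        ring
    obtain ⟨snm, stsum⟩ := nmul_geom hu0 hu1
    have hmaj : Summable fun n : ℕ => K ε * (r ε)⁻¹ * ((n:ℝ) * u ^ (n-1)) := snm.mul_left _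
    have hsum : Summable fun n : ℕ => (n : ℂ) * a' n ε * x ε ^ (n - 1) :=
      Summable.of_norm_bounded hmaj hterm
    refine ⟨hsum, ?_⟩
    have hnorms : Summable fun n : ℕ => ‖(n : ℂ) * a' n ε * x ε ^ (n - 1)‖ :=
      Summable.of_nonneg_of_le (fun n => norm_nonneg _) hterm hmaj
    have hKr0 : 0 ≤ K ε * (r ε)⁻¹ := mul_nonneg hK0 (inv_nonneg.2 hr0.le)
    calc ‖∑' n : ℕ, (n : ℂ) * a' n ε * x ε ^ (n - 1)‖
        ≤ ∑' n : ℕ, ‖(n : ℂ) * a' n ε * x ε ^ (n - 1)‖ := norm_tsum_le_tsum_norm hnorms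
      _ ≤ ∑' n : ℕ, K ε * (r ε)⁻¹ * ((n:ℝ) * u ^ (n-1)) := Summable.tsum_le_tsum hterm hnorms hmaj
      _ = K ε * (r ε)⁻¹ * ∑' n : ℕ, (n:ℝ) * u ^ (n-1) := tsum_mul_left
      _ ≤ K ε * (r ε)⁻¹ * (2 * ((1-u)⁻¹)^2) := mul_le_mul_of_nonneg_left stsum hKr0
      _ ≤ K ε * (r ε)⁻¹ * (2 * ((g.ρ ε ^ (B + R₁))⁻¹)^2) := by
          apply mul_le_mul_of_nonneg_left _ hKr0
          have : (1-u)⁻¹ ≤ (g.ρ ε ^ (B + R₁))⁻¹ := inv_anti₀ (pow_pos hρ _) h1u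
          have h0 : (0:ℝ) ≤ (1-u)⁻¹ := by
            have : 0 < 1 - u := by linarith [pow_pos hρ (B + R₁)]
            positivity
          nlinarith
  constructor
  · exact h.mono fun ε hε hε1 hh => (key ε hε hε1 hh).1
  · refine ⟨N₀ + B + 2*(B + R₁) + 1,
      (h.and (g.evs_le (show (0:ℝ) < 1/2 by norm_num))).mono fun ε hε hε1 hh => ?_⟩
    obtain ⟨⟨hK0, hK, hr0, hrR, hbd, hxr⟩, hhalf⟩ := hh
    have hρ := g.pos ε hε hε1
    have hb := (key ε hε hε1 ⟨hK0, hK, hr0, hrR, hbd, hxr⟩).2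
    refine le_trans hb ?_
    have hinvrB : (r ε)⁻¹ ≤ (g.ρ ε ^ B)⁻¹ := by
      apply inv_anti₀ (pow_pos hρ B)
      have := norm_nonneg (x ε); linarith
    have hKz : K ε ≤ (g.ρ ε ^ N₀)⁻¹ := by rwa [zpow_neg, zpow_natCast] at hK
    have h2ρ : (2:ℝ) ≤ (g.ρ ε)⁻¹ := by
      rw [← one_div, le_div_iff₀ hρ]; linarith
    have hy0 : (0:ℝ) ≤ ((g.ρ ε ^ (B + R₁))⁻¹)^2 := by positivity
    rw [zpow_neg, zpow_natCast]
    calc K ε * (r ε)⁻¹ * (2 * ((g.ρ ε ^ (B + R₁))⁻¹)^2)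
        ≤ (g.ρ ε ^ N₀)⁻¹ * (g.ρ ε ^ B)⁻¹ * ((g.ρ ε)⁻¹ * ((g.ρ ε ^ (B + R₁))⁻¹)^2) := by
          apply mul_le_mul (mul_le_mul hKz hinvrB (inv_nonneg.2 hr0.le)
            (inv_nonneg.2 (pow_nonneg hρ.le _)))
            (mul_le_mul_of_nonneg_right h2ρ hy0)
            (by positivity)
            (mul_nonneg (inv_nonneg.2 (pow_nonneg hρ.le _))
              (inv_nonneg.2 (pow_nonneg hρ.le _)))
      _ = (g.ρ ε ^ (N₀ + B + 2*(B + R₁) + 1))⁻¹ := by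
          rw [inv_pow, ← mul_inv, ← mul_inv, ← mul_inv]
          congr 1
          ring

end DerivMain
section Setup

theorem setup_u (g : Gauge) (y : ℝ → ℂ) (r K : ℝ → ℝ) (a' : ℕ → ℝ → ℂ) (m' R₁ N₀ : ℕ)
    (h : EvS fun ε => (0 < K ε ∧ K ε ≤ g.ρ ε ^ (-(N₀:ℤ)) ∧
      (∀ n : ℕ, ‖a' n ε‖ * r ε ^ n ≤ K ε) ∧ 0 < r ε ∧ r ε ≤ g.ρ ε ^ (-(R₁:ℤ))) ∧
      ‖y ε‖ + g.ρ ε ^ m' ≤ r ε) :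
    EvS fun ε => 0 ≤ K ε ∧ K ε ≤ g.ρ ε ^ (-(N₀:ℤ)) ∧ 0 ≤ ‖y ε‖ / r ε ∧
      ‖y ε‖ / r ε + g.ρ ε ^ (m' + R₁) ≤ 1 ∧
      ∀ n : ℕ, ‖a' n ε * y ε ^ n‖ ≤ K ε * (‖y ε‖ / r ε) ^ n := by
  refine h.mono fun ε hε hε1 hh => ?_
  obtain ⟨⟨hK0, hK, hbd, hr0, hrR⟩, hyr⟩ := hh
  have hρ := g.pos ε hε hε1
  have hinvr : g.ρ ε ^ R₁ ≤ (r ε)⁻¹ := by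
    have h1 : (g.ρ ε ^ (-(R₁:ℤ)))⁻¹ ≤ (r ε)⁻¹ := inv_anti₀ hr0 hrR
    rwa [zpow_neg, inv_inv, zpow_natCast] at h1
  have hu0 : 0 ≤ ‖y ε‖ / r ε := div_nonneg (norm_nonneg _) hr0.le
  have hxu : ‖y ε‖ = (‖y ε‖ / r ε) * r ε := (div_mul_cancel₀ _ hr0.ne').symm
  refine ⟨hK0.le, hK, hu0, ?_, ?_⟩
  · have e1 : g.ρ ε ^ (m' + R₁) ≤ g.ρ ε ^ m' * (r ε)⁻¹ := by
      rw [pow_add]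
      exact mul_le_mul_of_nonneg_left hinvr (pow_nonneg hρ.le _)
    have e2 : ‖y ε‖ / r ε + g.ρ ε ^ m' * (r ε)⁻¹ ≤ 1 := by
      rw [div_eq_mul_inv, ← add_mul]
      calc (‖y ε‖ + g.ρ ε ^ m') * (r ε)⁻¹ ≤ r ε * (r ε)⁻¹ :=
            mul_le_mul_of_nonneg_right hyr (inv_nonneg.2 hr0.le)
        _ = 1 := mul_inv_cancel₀ hr0.ne'
    linarith
  · intro n
    calc ‖a' n ε * y ε ^ n‖ = ‖a' n ε‖ * ‖y ε‖ ^ n := by rw [norm_mul, norm_pow]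
      _ = ‖a' n ε‖ * r ε ^ n * (‖y ε‖ / r ε) ^ n := by
          have hyy : r ε * (‖y ε‖ / r ε) = ‖y ε‖ := by field_simp
          rw [mul_assoc, ← mul_pow, hyy]
      _ ≤ K ε * (‖y ε‖ / r ε) ^ n :=
          mul_le_mul_of_nonneg_right (hbd n) (pow_nonneg hu0 n)

end Setup

/-- Abel-type theorem: eventual boundedness at ẑ gives absolute convergence
on B_{|ẑ−c|}(c), eventual boundedness there, and sharply interior points. -/
theorem stmt13 (g : Gauge) (a a' : ℕ → ℝ → ℂ) (ha : g.WMod a) (c zh : Ct g)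
    (hzh : zh ∈ convSet g a c) (ha' : g.WMod a') (heq : g.StrEquiv a a')
    (zhr cr : ℝ → ℂ) (hzhr : IsRep g zhr zh) (hcr : IsRep g cr c)
    (K : ℝ → ℝ) (hKmod : g.Mod K) (hKpos : EvS fun ε => 0 < K ε)
    (hbd : EvS fun ε => ∀ n : ℕ, ‖a' n ε * (zhr ε - cr ε) ^ n‖ < K ε) :
    ∀ z : Ct g, GQ.absLt g z c (GQ.abs g (GQ.sub g zh c)) →
      ∀ zr : ℝ → ℂ, IsRep g zr z →
        ((∃ hS : g.SMod fun n ε => ‖a' n ε * (zr ε - cr ε) ^ n‖,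
            ∃ t : Rt g, HSConv g (fun n ε => ‖a' n ε * (zr ε - cr ε) ^ n‖) hS t) ∧
          (∃ K' : ℝ → ℝ, g.Mod K' ∧ (EvS fun ε => 0 < K' ε) ∧
            EvS fun ε => ∀ n : ℕ, ‖a' n ε * (zr ε - cr ε) ^ n‖ < K' ε) ∧
          (∃ hS' : g.SMod (PSeriesNet a' zr cr),
            (EvS fun ε => Summable fun n : ℕ => PSeriesNet a' zr cr n ε) ∧
            ∃ hm : g.Mod fun ε => ∑' n : ℕ, PSeriesNet a' zr cr n ε,
              HSConv g (PSeriesNet a' zr cr) hS' (GQ.mk g _ hm))) ∧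
        ∃ t : Rt g, Rt.lt g (GQ.zero g ℝ) t ∧
          ∀ w : Ct g, GQ.absLt g w z t → w ∈ convSet g a c := by
  intro z hz zr hzr
  -- set up the radius net r and basic bounds
  set r : ℝ → ℝ := fun ε => ‖zhr ε - cr ε‖ with hrdef
  obtain ⟨hzhrm, -⟩ := id hzhr
  obtain ⟨hcrm, -⟩ := id hcr
  have hrmod : g.Mod r := (hzhrm.sub hcrm).norm
  obtain ⟨hrmod', hrrep⟩ := absSub_rep g hzhr hcr
  obtain ⟨N₀, hKN⟩ := hKmod
  obtain ⟨R₁, hrR⟩ := hrmod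
  obtain ⟨m', hm'⟩ := absLt_est hz hzr hcr (hrm := hrmod') hrrep
  -- the core eventual facts
  have hcore : EvS fun ε => 0 < K ε ∧ K ε ≤ g.ρ ε ^ (-(N₀:ℤ)) ∧
      (∀ n : ℕ, ‖a' n ε‖ * r ε ^ n ≤ K ε) ∧ 0 < r ε ∧ r ε ≤ g.ρ ε ^ (-(R₁:ℤ)) := by
    refine ((((hKpos.and hKN).and hbd).and hm').and hrR).mono fun ε hε hε1 hh => ?_
    obtain ⟨⟨⟨⟨hKp, hKb⟩, hb⟩, hd⟩, hrb⟩ := hh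
    have hρ := g.pos ε hε hε1
    refine ⟨hKp, ?_, fun n => ?_, ?_, ?_⟩
    · exact le_trans (le_abs_self _) (by rwa [Real.norm_eq_abs] at hKb)
    · have := (hb n).le
      rwa [norm_mul, norm_pow] at this
    · calc (0:ℝ) < g.ρ ε ^ m' := pow_pos hρ _
        _ ≤ ‖zr ε - cr ε‖ + g.ρ ε ^ m' := le_add_of_nonneg_left (norm_nonneg _)
        _ ≤ r ε := hd
    · exact le_trans (le_abs_self _) (by rwa [Real.norm_eq_abs] at hrb)
  -- absolute convergence and convergence at z
  have huz := setup_u g (fun ε => zr ε - cr ε) r K a' m' R₁ N₀ (hcore.and hm')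
  obtain ⟨hSC, hsummC, hmC, hlimC⟩ :=
    geom_main g (PSeriesNet a' zr cr) K (fun ε => ‖zr ε - cr ε‖ / r ε) N₀ (m' + R₁) huz
  have huzR : EvS fun ε => 0 ≤ K ε ∧ K ε ≤ g.ρ ε ^ (-(N₀:ℤ)) ∧
      0 ≤ ‖zr ε - cr ε‖ / r ε ∧ ‖zr ε - cr ε‖ / r ε + g.ρ ε ^ (m' + R₁) ≤ 1 ∧
      ∀ n : ℕ, ‖(‖a' n ε * (zr ε - cr ε) ^ n‖ : ℝ)‖ ≤ K ε * (‖zr ε - cr ε‖ / r ε) ^ n := by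
    refine huz.mono fun ε hε hε1 hh => ⟨hh.1, hh.2.1, hh.2.2.1, hh.2.2.2.1, fun n => ?_⟩
    rw [norm_norm]
    exact hh.2.2.2.2 n
  obtain ⟨hSR, hsummR, hmR, hlimR⟩ :=
    geom_main g (fun n ε => ‖a' n ε * (zr ε - cr ε) ^ n‖) K
      (fun ε => ‖zr ε - cr ε‖ / r ε) N₀ (m' + R₁) huzR
  refine ⟨⟨⟨hSR, GQ.mk g _ hmR, hlimR⟩, ?_, hSC, hsummC, hmC, hlimC⟩, ?_⟩
  · -- eventual boundedness at z with the same K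
    refine ⟨K, ⟨N₀, hKN⟩, hKpos, (hbd.and hm').mono fun ε hε hε1 hh n => ?_⟩
    obtain ⟨hb, hd⟩ := hh
    have hzc : ‖zr ε - cr ε‖ ≤ r ε := by
      have := pow_pos (g.pos ε hε hε1) m'
      linarith
    calc ‖a' n ε * (zr ε - cr ε) ^ n‖ = ‖a' n ε‖ * ‖zr ε - cr ε‖ ^ n := by
          rw [norm_mul, norm_pow]
      _ ≤ ‖a' n ε‖ * r ε ^ n := by
          apply mul_le_mul_of_nonneg_left _ (norm_nonneg _)
          exact pow_le_pow_left₀ (norm_nonneg _) hzc n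
      _ = ‖a' n ε * (zhr ε - cr ε) ^ n‖ := by rw [norm_mul, norm_pow]
      _ < K ε := hb n
  -- Part 2: sharply interior
  refine ⟨g.dpow (m' + 2), ⟨⟨fun _ => (0:ℝ), g.mod_const 0 (by simp)⟩,
    ⟨fun ε => g.ρ ε ^ (m' + 2), g.mod_pow _⟩, rfl, rfl, m' + 2,
    ⟨1, one_pos, le_refl 1, fun ε hε hε1 => by simp⟩⟩, ?_⟩
  intro w hw
  obtain ⟨Aw, Bw, Uw, eAw, eBw, eUw, mw, hevw⟩ := id hw
  have hwrep : IsRep g Aw.1 w := ⟨Aw.2, eAw⟩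
  obtain ⟨mw', hwz0⟩ := absLt_est hw hwrep hzr (hrm := g.mod_pow (m' + 2)) rfl
  have hwz : EvS fun ε => ‖Aw.1 ε - zr ε‖ ≤ g.ρ ε ^ (m' + 2) := by
    refine hwz0.mono fun ε hε hε1 hh => ?_
    have := pow_pos (g.pos ε hε hε1) mw'
    linarith
  -- distance from w to c
  have hww : EvS fun ε => ‖Aw.1 ε - cr ε‖ + g.ρ ε ^ (m' + 1) ≤ r ε := by
    refine ((hwz.and hm').and (g.evs_le (show (0:ℝ) < 1/2 by norm_num))).mono
      fun ε hε hε1 hh => ?_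
    obtain ⟨⟨h1, h2⟩, h3⟩ := hh
    have hρ := g.pos ε hε hε1
    have t1 : ‖Aw.1 ε - cr ε‖ ≤ ‖Aw.1 ε - zr ε‖ + ‖zr ε - cr ε‖ := by
      simpa [dist_eq_norm] using dist_triangle (Aw.1 ε) (zr ε) (cr ε)
    have am : (0:ℝ) ≤ g.ρ ε ^ m' := pow_nonneg hρ.le m'
    have e1 : g.ρ ε ^ (m'+1) ≤ g.ρ ε ^ m' * (1/2) := by
      rw [pow_succ]; exact mul_le_mul_of_nonneg_left h3 am
    have e2 : g.ρ ε ^ (m'+2) ≤ g.ρ ε ^ m' * (1/4) := by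
      have hq : g.ρ ε * g.ρ ε ≤ 1/4 := by nlinarith [hρ.le]
      calc g.ρ ε ^ (m'+2) = g.ρ ε ^ m' * (g.ρ ε * g.ρ ε) := by ring
        _ ≤ g.ρ ε ^ m' * (1/4) := mul_le_mul_of_nonneg_left hq am
    linarith
  refine ⟨?_, Aw.1, cr, a', hwrep, hcr, ha', heq, ?_⟩
  · -- RadLt g a w c
    obtain ⟨zr₂, cr₂, a₂, hz₂, hc₂, hW₂, hE₂, m₀, hrad⟩ := hzh.1
    have ncr : g.Negl fun ε => cr ε - cr₂ ε := rep_negl g hcr hc₂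
    have nzh : g.Negl fun ε => zhr ε - zr₂ ε := rep_negl g hzhr hz₂
    refine ⟨Aw.1, cr₂, a₂, hwrep, hc₂, hW₂, hE₂, m' + 1, ?_⟩
    refine (((((hwz.and hm').and (ncr (m'+3))).and (nzh (m'+3))).and
      (g.evs_le (show (0:ℝ) < 1/4 by norm_num))).and hrad).mono fun ε hε hε1 hh => ?_
    obtain ⟨⟨⟨⟨⟨h1, h2⟩, h3⟩, h4⟩, h5⟩, h6⟩ := hh
    have hρ := g.pos ε hε hε1
    have t1 : ‖Aw.1 ε - cr₂ ε‖ ≤ ‖Aw.1 ε - zr ε‖ + ‖zr ε - cr ε‖ + ‖cr ε - cr₂ ε‖ := by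
      simpa [dist_eq_norm] using dist_triangle4 (Aw.1 ε) (zr ε) (cr ε) (cr₂ ε)
    have t2 : ‖zhr ε - cr ε‖ ≤ ‖zhr ε - zr₂ ε‖ + ‖zr₂ ε - cr₂ ε‖ + ‖cr₂ ε - cr ε‖ := by
      simpa [dist_eq_norm] using dist_triangle4 (zhr ε) (zr₂ ε) (cr₂ ε) (cr ε)
    have h3' : ‖cr ε - cr₂ ε‖ ≤ g.ρ ε ^ (m'+3) := h3
    have h3'' : ‖cr₂ ε - cr ε‖ ≤ g.ρ ε ^ (m'+3) := by rw [norm_sub_rev]; exact h3'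
    have h4' : ‖zhr ε - zr₂ ε‖ ≤ g.ρ ε ^ (m'+3) := h4
    have am : (0:ℝ) ≤ g.ρ ε ^ m' := pow_nonneg hρ.le m'
    have e1 : g.ρ ε ^ (m'+1) ≤ g.ρ ε ^ m' * (1/4) := by
      rw [pow_succ]; exact mul_le_mul_of_nonneg_left h5 am
    have e2 : g.ρ ε ^ (m'+2) ≤ g.ρ ε ^ m' * (1/16) := by
      have hq : g.ρ ε * g.ρ ε ≤ 1/16 := by nlinarith [hρ.le]
      calc g.ρ ε ^ (m'+2) = g.ρ ε ^ m' * (g.ρ ε * g.ρ ε) := by ring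
        _ ≤ g.ρ ε ^ m' * (1/16) := mul_le_mul_of_nonneg_left hq am
    have e3 : g.ρ ε ^ (m'+3) ≤ g.ρ ε ^ m' * (1/64) := by
      have hq : g.ρ ε * g.ρ ε * g.ρ ε ≤ 1/64 := by nlinarith [hρ.le]
      calc g.ρ ε ^ (m'+3) = g.ρ ε ^ m' * (g.ρ ε * g.ρ ε * g.ρ ε) := by ring
        _ ≤ g.ρ ε ^ m' * (1/64) := mul_le_mul_of_nonneg_left hq am
    have hreal : ‖Aw.1 ε - cr₂ ε‖ + g.ρ ε ^ (m'+1) ≤ ‖zr₂ ε - cr₂ ε‖ + g.ρ ε ^ m₀ := by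
      have hm₀ : (0:ℝ) ≤ g.ρ ε ^ m₀ := pow_nonneg hρ.le m₀
      have h2' : ‖zr ε - cr ε‖ + g.ρ ε ^ m' ≤ ‖zhr ε - cr ε‖ := h2
      linarith
    exact le_trans (ENNReal.ofReal_le_ofReal hreal) h6
  · -- ConvConds g a' Aw.1 cr w
    have huw := setup_u g (fun ε => Aw.1 ε - cr ε) r K a' (m' + 1) R₁ N₀ (hcore.and hww)
    obtain ⟨hSW, hsummW, hmW, hlimW⟩ :=
      geom_main g (PSeriesNet a' Aw.1 cr) K (fun ε => ‖Aw.1 ε - cr ε‖ / r ε) N₀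
        ((m' + 1) + R₁) huw
    refine ⟨hSW, hsummW, ⟨hmW, hlimW⟩, ?_⟩
    intro wr' hwr'
    have nww : g.Negl fun ε => wr' ε - Aw.1 ε := rep_negl g hwr' hwrep
    have hx : EvS fun ε => ‖wr' ε - cr ε‖ + g.ρ ε ^ (m' + 2) ≤ r ε := by
      refine ((hww.and (nww (m'+4))).and (g.evs_le (show (0:ℝ) < 1/2 by norm_num))).mono
        fun ε hε hε1 hh => ?_
      obtain ⟨⟨h1, h2⟩, h3⟩ := hh
      have hρ := g.pos ε hε hε1
      have t1 : ‖wr' ε - cr ε‖ ≤ ‖wr' ε - Aw.1 ε‖ + ‖Aw.1 ε - cr ε‖ := by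
        simpa [dist_eq_norm] using dist_triangle (wr' ε) (Aw.1 ε) (cr ε)
      have h2' : ‖wr' ε - Aw.1 ε‖ ≤ g.ρ ε ^ (m'+4) := h2
      have am : (0:ℝ) ≤ g.ρ ε ^ (m'+1) := pow_nonneg hρ.le _
      have e1 : g.ρ ε ^ (m'+2) ≤ g.ρ ε ^ (m'+1) * (1/2) := by
        rw [pow_succ]; exact mul_le_mul_of_nonneg_left h3 am
      have e2 : g.ρ ε ^ (m'+4) ≤ g.ρ ε ^ (m'+1) * (1/8) := by
        have hq : g.ρ ε * g.ρ ε * g.ρ ε ≤ 1/8 := by nlinarith [hρ.le]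
        calc g.ρ ε ^ (m'+4) = g.ρ ε ^ (m'+1) * (g.ρ ε * g.ρ ε * g.ρ ε) := by ring
          _ ≤ g.ρ ε ^ (m'+1) * (1/8) := mul_le_mul_of_nonneg_left hq am
      linarith
    have hder := deriv_main g a' K r (fun ε => wr' ε - cr ε) N₀ (m' + 2) R₁
      ((hcore.and hx).mono fun ε hε hε1 hh =>
        ⟨hh.1.1.le, hh.1.2.1, hh.1.2.2.2.1, hh.1.2.2.2.2, hh.1.2.2.1, hh.2⟩)
    exact hder
end
end

section
/- Isolated zeros on a subpoint: let U ⊆ ℂ~ be sharply open, z₀ ∈ U, and f : U → ℂ~ a GHF such that the Taylor coefficient net (f_ε^(n)(z_{0ε})/n!)_{n,ε} (for a representative [z_{0ε}] = z₀ as in the definition of GHF) is weakly ρ-moderate with class T ∈ ℂ~_c, and such that for some s ∈ ℝ~ with s > 0 one has B_s(z₀) ⊆ U ∩ σ(T, z₀) and f(z) = Σ_{n∈ℕ~} (f^(n)(z₀)/n!)(z − z₀)^n for all z ∈ B_s(z₀). If f(z₀) = 0 and there exists n ∈ ℕ with n ≥ 1 and f^(n)(z₀) ≠ 0 in ℂ~,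 then there exist L ⊆ (0,1] with 0 an accumulation point of L and r ∈ ℝ~ with 0 < r ≤ s such that for all z ∈ B_r(z₀): if |z − z₀| > 0 then f(z) is invertible on L. -/
open Filter

noncomputable section

variable {𝕜 : Type} [RCLike 𝕜]

/-- A net of holomorphic functions on a net of open sets. -/
structure GHFData where
  F : ℝ → ℂ → ℂ
  Ω : ℝ → Set ℂ
  isOpen : ∀ ε : ℝ, IsOpen (Ω ε)
  holo : ∀ ε : ℝ, DifferentiableOn ℂ (F ε) (Ω ε)

/-- `zr` is a representative of z as in the definition of GHF: it takes values in the
domains, all derivative nets are moderate, and f(z) = [F_ε(z_ε)]. -/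
def GoodRep (g : Gauge) (D : GHFData) (f : Ct g → Ct g) (zr : ℝ → ℂ) (z : Ct g) : Prop :=
  IsRep g zr z ∧ (EvS fun ε => zr ε ∈ D.Ω ε) ∧
  (∀ n : ℕ, g.Mod fun ε => iteratedDeriv n (D.F ε) (zr ε)) ∧
  ∃ hm : g.Mod fun ε => D.F ε (zr ε), f z = GQ.mk g _ hm

/-- f : U → ℂ~ is a generalized holomorphic function defined by the net D. -/
def IsGHF (g : Gauge) (U : Set (Ct g)) (f : Ct g → Ct g) (D : GHFData) : Prop :=
  (∀ z ∈ U, ∃ zr : ℝ → ℂ, GoodRep g D f zr z) ∧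
  ∀ z ∈ U, ∀ zr zr' : ℝ → ℂ, GoodRep g D f zr z → GoodRep g D f zr' z → ∀ n : ℕ,
    g.Negl fun ε => iteratedDeriv n (D.F ε) (zr ε) - iteratedDeriv n (D.F ε) (zr' ε)

/-!
Let `k` be the first index whose Taylor coefficient `T k` is not negligible, and let `L` be the
set of `ε` where `‖T k ε‖ > ρ_ε^q` for a suitable `q`; `L` accumulates at `0` precisely because
`T k` is not negligible. For `0 < |z - z₀| < r` with `r` a high enough power of `dρ`, the partial
sums of the hyper-power series at `z` are dominated, for `ε ∈ L`, by the term
`T k ε (z_ε - z₀_ε)^k`: the earlier terms are negligible, while the weak moderateness bound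
`ρ_ε^(-(nQ+R))` makes the tail a geometric series in `ρ_ε^(-Q) |z_ε - z₀_ε|`, hence small. Since
`f(z)` is the hyperlimit of these partial sums, it stays above a fixed power of `ρ_ε` on `L`.
-/

section RealEstimates

open Finset

theorem norm_sum_Ico_le_of_norm_le_geometric {E : Type*} [SeminormedAddCommGroup E]
    {b : ℕ → E} {C u : ℝ} (hu0 : 0 ≤ u) (hu : u ≤ 1 / 2) (hb : ∀ n, ‖b n‖ ≤ C * u ^ n)
    (m N : ℕ) : ‖∑ n ∈ Ico m N, b n‖ ≤ 2 * C * u ^ m := by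
  have hC : 0 ≤ C := by simpa using (norm_nonneg _).trans (hb 0)
  have hgeom : u ^ m / (1 - u) ≤ 2 * u ^ m := by
    rw [div_le_iff₀ (by linarith)]
    nlinarith [pow_nonneg hu0 m]
  calc ‖∑ n ∈ Ico m N, b n‖ ≤ ∑ n ∈ Ico m N, ‖b n‖ := norm_sum_le _ _
    _ ≤ ∑ n ∈ Ico m N, C * u ^ n := sum_le_sum fun n _ => hb n
    _ = C * ∑ n ∈ Ico m N, u ^ n := (mul_sum _ _ _).symm
    _ ≤ C * (2 * u ^ m) :=
        mul_le_mul_of_nonneg_left ((geom_sum_Ico_le_of_lt_one hu0 (by linarith)).trans hgeom) hC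
    _ = 2 * C * u ^ m := by ring

theorem half_le_norm_sum_of_dominant {E : Type*} [SeminormedAddCommGroup E] {b : ℕ → E}
    {k N : ℕ} (hkN : k ≤ N) {c : ℝ} (hk : c ≤ ‖b k‖) (hhead : ‖∑ n ∈ range k, b n‖ ≤ c / 4)
    (htail : ‖∑ n ∈ Ico (k + 1) (N + 1), b n‖ ≤ c / 4) :
    c / 2 ≤ ‖∑ n ∈ range (N + 1), b n‖ := by
  set X := ∑ n ∈ range k, b n
  set Z := ∑ n ∈ Ico (k + 1) (N + 1), b n
  have hsplit : ∑ n ∈ range (N + 1), b n = X + b k + Z := by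
    rw [← sum_range_succ, sum_range_add_sum_Ico _ (by omega)]
  have htri : ‖b k‖ ≤ ‖X + b k + Z‖ + ‖X‖ + ‖Z‖ :=
    calc ‖b k‖ = ‖X + b k + Z - X - Z‖ := by congr 1; abel
      _ ≤ ‖X + b k + Z - X‖ + ‖Z‖ := norm_sub_le _ _
      _ ≤ ‖X + b k + Z‖ + ‖X‖ + ‖Z‖ := by gcongr; exact norm_sub_le _ _
  rw [hsplit]
  linarith

theorem le_norm_sum_of_dominant_coeff {ρ : ℝ} (hρ0 : 0 < ρ) (hρ : ρ ≤ 1 / 2) {a : ℕ → ℂ}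
    {w : ℂ} {q Q R k N : ℕ} (hkN : k ≤ N) (hup : ∀ n, ‖a n‖ ≤ (ρ ^ (n * Q + R))⁻¹)
    (hlow : ρ ^ q ≤ ‖a k‖) (hhead : ∑ j ∈ range k, ‖a j‖ ≤ ρ ^ q * ‖w‖ ^ k / 4)
    (hw : ‖w‖ ≤ ρ ^ (q + R + (k + 1) * Q + 3)) :
    ρ ^ q * ‖w‖ ^ k / 2 ≤ ‖∑ n ∈ range (N + 1), a n * w ^ n‖ := by
  have hw1 : ‖w‖ ≤ 1 := hw.trans (pow_le_one₀ hρ0.le (by linarith))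
  have hQ : 0 < ρ ^ Q := pow_pos hρ0 Q
  have hρ3 : ρ ^ 3 ≤ 1 / 8 := by
    calc ρ ^ 3 ≤ (1 / 2) ^ 3 := pow_le_pow_left₀ hρ0.le hρ 3
      _ = 1 / 8 := by norm_num
  have hw' : ‖w‖ ≤ ρ ^ (q + 3) * (ρ ^ R * (ρ ^ Q) ^ (k + 1)) := by
    convert hw using 1
    rw [← pow_mul, ← pow_add, ← pow_add]
    ring_nf
  set u := (ρ ^ Q)⁻¹ * ‖w‖
  have hterm : ∀ n, ‖a n * w ^ n‖ ≤ (ρ ^ R)⁻¹ * u ^ n := fun n => by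
    rw [norm_mul, norm_pow, mul_pow, inv_pow, ← pow_mul, mul_comm Q n]
    calc ‖a n‖ * ‖w‖ ^ n ≤ (ρ ^ (n * Q + R))⁻¹ * ‖w‖ ^ n := by gcongr; exact hup n
      _ = (ρ ^ R)⁻¹ * ((ρ ^ (n * Q))⁻¹ * ‖w‖ ^ n) := by rw [pow_add, mul_inv]; ring
  have hu : u ≤ 1 / 2 := by
    have hRQ : ρ ^ R * (ρ ^ Q) ^ k ≤ 1 :=
      mul_le_one₀ (pow_le_one₀ hρ0.le (by linarith)) (by positivity)
        (pow_le_one₀ hQ.le (pow_le_one₀ hρ0.le (by linarith)))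
    have hq3 : ρ ^ (q + 3) ≤ ρ ^ 3 := pow_le_pow_of_le_one hρ0.le (by linarith) (by omega)
    calc u ≤ (ρ ^ Q)⁻¹ * (ρ ^ (q + 3) * (ρ ^ R * (ρ ^ Q) ^ (k + 1))) :=
          mul_le_mul_of_nonneg_left hw' (by positivity)
      _ = ρ ^ (q + 3) * (ρ ^ R * (ρ ^ Q) ^ k) := by field_simp; ring
      _ ≤ ρ ^ 3 * 1 := mul_le_mul hq3 hRQ (by positivity) (by positivity)
      _ ≤ 1 / 2 := by linarith
  refine half_le_norm_sum_of_dominant hkN ?_ ?_ ?_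
  · rw [norm_mul, norm_pow]
    exact mul_le_mul_of_nonneg_right hlow (by positivity)
  · refine (norm_sum_le _ _).trans ((sum_le_sum fun j _ => ?_).trans hhead)
    rw [norm_mul, norm_pow]
    exact mul_le_of_le_one_right (norm_nonneg _) (pow_le_one₀ (norm_nonneg _) hw1)
  · have hkey : (ρ ^ R)⁻¹ * ((ρ ^ Q) ^ (k + 1))⁻¹ * ‖w‖ ≤ ρ ^ (q + 3) := by
      rw [← mul_inv, inv_mul_le_iff₀ (by positivity)]
      linarith
    have hwk : 0 ≤ ρ ^ q * ‖w‖ ^ k := by positivity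
    calc ‖∑ n ∈ Ico (k + 1) (N + 1), a n * w ^ n‖ ≤ 2 * (ρ ^ R)⁻¹ * u ^ (k + 1) :=
          norm_sum_Ico_le_of_norm_le_geometric (by positivity) hu hterm _ _
      _ = 2 * ((ρ ^ R)⁻¹ * ((ρ ^ Q) ^ (k + 1))⁻¹ * ‖w‖) * ‖w‖ ^ k := by
          rw [mul_pow, inv_pow, pow_succ ‖w‖]; ring
      _ ≤ 2 * ρ ^ (q + 3) * ‖w‖ ^ k := by gcongr
      _ = ρ ^ q * ‖w‖ ^ k * (2 * ρ ^ 3) := by ring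
      _ ≤ ρ ^ q * ‖w‖ ^ k / 4 := by nlinarith

end RealEstimates

namespace Gauge

variable {g : Gauge} {𝕜 : Type} [RCLike 𝕜]

theorem pow_le_pow_of_le (g : Gauge) {ε : ℝ} (hε : 0 < ε) (hε1 : ε ≤ 1) {a b : ℕ}
    (hab : a ≤ b) : g.ρ ε ^ b ≤ g.ρ ε ^ a :=
  pow_le_pow_of_le_one (g.pos ε hε hε1).le (g.le_one ε hε hε1) hab

theorem evs_le_pow_of_le {x : ℝ → ℝ} {a b : ℕ} (h : EvS fun ε => x ε ≤ g.ρ ε ^ b)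
    (hab : a ≤ b) : EvS fun ε => x ε ≤ g.ρ ε ^ a :=
  h.mono fun _ hε hε1 hx => hx.trans (g.pow_le_pow_of_le hε hε1 hab)

theorem evs_mul_pow_succ_le (g : Gauge) (C : ℝ) (m : ℕ) :
    EvS fun ε => C * g.ρ ε ^ (m + 1) ≤ g.ρ ε ^ m := by
  refine (g.evs_le (δ := 1 / (|C| + 1)) (by positivity)).mono fun ε hε hε1 hδ => ?_
  have hρ := g.pos ε hε hε1
  have hCρ : C * g.ρ ε ≤ 1 :=
    calc C * g.ρ ε ≤ (|C| + 1) * g.ρ ε := by gcongr; linarith [le_abs_self C]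
      _ ≤ 1 := by rwa [le_div_iff₀' (by positivity)] at hδ
  calc C * g.ρ ε ^ (m + 1) = g.ρ ε ^ m * (C * g.ρ ε) := by ring
    _ ≤ g.ρ ε ^ m := mul_le_of_le_one_right (pow_nonneg hρ.le m) hCρ

theorem negl_zero (g : Gauge) : g.Negl (0 : ℝ → 𝕜) := fun q =>
  ⟨1, one_pos, le_rfl, fun ε hε hε1 => by simpa using pow_nonneg (g.pos ε hε hε1).le q⟩

theorem negl_finset_sum {ι : Type*} (s : Finset ι) {x : ι → ℝ → 𝕜}
    (h : ∀ i ∈ s, g.Negl (x i)) : g.Negl fun ε => ∑ i ∈ s, x i ε := by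
  rw [show (fun ε => ∑ i ∈ s, x i ε) = ∑ i ∈ s, x i from
    funext fun ε => (Finset.sum_apply ε s x).symm]
  exact Finset.sum_induction x g.Negl (fun _ _ ha hb => ha.add hb) g.negl_zero h

theorem Negl.norm {x : ℝ → 𝕜} (h : g.Negl x) : g.Negl fun ε => ‖x ε‖ := fun q =>
  (h q).mono fun ε _ _ hx => by rwa [norm_norm]

theorem Negl.mul_const {x : ℝ → 𝕜} (h : g.Negl x) (c : 𝕜) : g.Negl fun ε => x ε * c := by
  intro q
  refine ((h (q + 1)).and (g.evs_mul_pow_succ_le ‖c‖ q)).mono fun ε hε hε1 ⟨hx, hc⟩ => ?_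
  calc ‖x ε * c‖ = ‖x ε‖ * ‖c‖ := norm_mul _ _
    _ ≤ g.ρ ε ^ (q + 1) * ‖c‖ := by gcongr
    _ ≤ g.ρ ε ^ q := by linarith

theorem exists_subpoint_of_not_negl {x : ℝ → 𝕜} (h : ¬ g.Negl x) :
    ∃ q : ℕ, ∀ δ : ℝ, 0 < δ → ∃ ε ∈ {ε : ℝ | 0 < ε ∧ ε ≤ 1 ∧ g.ρ ε ^ q < ‖x ε‖}, ε < δ := by
  simp only [Negl, EvS, not_forall, not_exists, not_and, not_le] at h
  obtain ⟨q, hq⟩ := h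
  refine ⟨q, fun δ hδ => ?_⟩
  obtain ⟨ε, hε, hεδ, hx⟩ := hq (min (δ / 2) 1) (by positivity) (min_le_right _ _)
  exact ⟨ε, ⟨hε, hεδ.trans (min_le_right _ _), hx⟩, by linarith [min_le_left (δ / 2) 1]⟩

end Gauge

section Representatives

variable {g : Gauge} {𝕜 : Type} [RCLike 𝕜]

theorem GQ.exists_isRep (z : GQ g 𝕜) : ∃ x, IsRep g x z := by
  obtain ⟨⟨x, hx⟩, rfl⟩ := Quotient.exists_rep z
  exact ⟨x, hx, rfl⟩

theorem isRep_zero : IsRep g (fun _ => (0 : 𝕜)) (GQ.zero g 𝕜) := ⟨_, rfl⟩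

theorem isRep_dpow (M : ℕ) : IsRep g (fun ε => g.ρ ε ^ M) (g.dpow M) := ⟨_, rfl⟩

theorem IsRep.negl_sub {x y : ℝ → 𝕜} {z : GQ g 𝕜} (hx : IsRep g x z) (hy : IsRep g y z) :
    g.Negl fun ε => x ε - y ε := by
  obtain ⟨hx, rfl⟩ := hx
  obtain ⟨hy, hyx⟩ := hy
  exact Quotient.exact hyx.symm

theorem IsRep.abs_sub {x y : ℝ → 𝕜} {z w : GQ g 𝕜} (hx : IsRep g x z) (hy : IsRep g y w) :
    IsRep g (fun ε => ‖x ε - y ε‖) (GQ.abs g (GQ.sub g z w)) := by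
  obtain ⟨hx, rfl⟩ := hx
  obtain ⟨hy, rfl⟩ := hy
  exact ⟨_, rfl⟩

theorem Rt.evs_pow_le_of_pos {x : Rt g} {xr : ℝ → ℝ} (hx : Rt.lt g (GQ.zero g ℝ) x)
    (hxr : IsRep g xr x) : ∃ m : ℕ, EvS fun ε => g.ρ ε ^ m ≤ xr ε := by
  obtain ⟨a, b, ha, hb, m, hm⟩ := hx
  have ha0 := IsRep.negl_sub ⟨a.2, ha⟩ isRep_zero
  have hbx := IsRep.negl_sub ⟨b.2, hb⟩ hxr
  refine ⟨m + 1, (((hm.and (ha0 (m + 1))).and (hbx (m + 1))).and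
    (g.evs_mul_pow_succ_le 3 m)).mono fun ε _ _ ⟨⟨⟨hab, ha⟩, hb⟩, hρ⟩ => ?_⟩
  simp only [sub_zero, Real.norm_eq_abs, abs_le] at ha hb
  linarith [ha.1, hb.2]

theorem Gauge.dpow_pos (g : Gauge) (M : ℕ) : Rt.lt g (GQ.zero g ℝ) (g.dpow M) :=
  ⟨_, _, rfl, rfl, M, 1, one_pos, le_rfl, fun ε _ _ => by simp⟩

theorem Rt.dpow_le_of_evs {r : Rt g} {rr : ℝ → ℝ} {m M : ℕ} (hr : IsRep g rr r)
    (hrm : EvS fun ε => g.ρ ε ^ m ≤ rr ε) (hmM : m ≤ M) : Rt.le g (g.dpow M) r := by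
  obtain ⟨hr, rfl⟩ := hr
  exact ⟨_, ⟨rr, hr⟩, rfl, rfl, hrm.mono fun _ hε hε1 h => (g.pow_le_pow_of_le hε hε1 hmM).trans h⟩

theorem GQ.evs_norm_sub_le_of_absLt_dpow {z w : GQ g 𝕜} {zr wr : ℝ → 𝕜} {M : ℕ}
    (h : GQ.absLt g z w (g.dpow (M + 1))) (hz : IsRep g zr z) (hw : IsRep g wr w) :
    EvS fun ε => ‖zr ε - wr ε‖ ≤ g.ρ ε ^ M := by
  obtain ⟨a, b, u, ha, hb, hu, m, hm⟩ := h
  have hza := hz.negl_sub ⟨a.2, ha⟩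
  have hbw := IsRep.negl_sub ⟨b.2, hb⟩ hw
  have hu' := IsRep.negl_sub ⟨u.2, hu⟩ (isRep_dpow (M + 1))
  refine ((((hm.and (hza (M + 1))).and (hbw (M + 1))).and (hu' (M + 1))).and
    (g.evs_mul_pow_succ_le 4 M)).mono fun ε hε hε1 ⟨⟨⟨⟨hab, hza⟩, hbw⟩, hu⟩, hρ⟩ => ?_
  simp only [Real.norm_eq_abs, abs_le] at hu
  have htri : ‖zr ε - wr ε‖ ≤ ‖zr ε - a.1 ε‖ + ‖a.1 ε - b.1 ε‖ + ‖b.1 ε - wr ε‖ :=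
    (norm_sub_le_norm_sub_add_norm_sub _ (b.1 ε) _).trans
      (by gcongr; exact norm_sub_le_norm_sub_add_norm_sub _ _ _)
  linarith [pow_nonneg (g.pos ε hε hε1).le m, hu.2]

theorem GQ.absLt_of_evs_norm_sub_le {z w : GQ g 𝕜} {r : Rt g} {zr wr : ℝ → 𝕜} {rr : ℝ → ℝ}
    {m : ℕ} (hz : IsRep g zr z) (hw : IsRep g wr w) (hr : IsRep g rr r)
    (hrm : EvS fun ε => g.ρ ε ^ m ≤ rr ε)
    (h : EvS fun ε => ‖zr ε - wr ε‖ ≤ g.ρ ε ^ (m + 1)) : GQ.absLt g z w r := by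
  obtain ⟨hz, rfl⟩ := hz
  obtain ⟨hw, rfl⟩ := hw
  obtain ⟨hr, rfl⟩ := hr
  exact ⟨⟨zr, hz⟩, ⟨wr, hw⟩, ⟨rr, hr⟩, rfl, rfl, rfl, m + 1,
    ((h.and hrm).and (g.evs_mul_pow_succ_le 2 m)).mono fun _ _ _ ⟨⟨hzw, hr⟩, hρ⟩ => by linarith⟩

theorem HSConv.exists_evs_norm_sub_le {A : ℕ → ℝ → 𝕜} {hA : g.SMod A} {y : GQ g 𝕜}
    {yr : ℝ → 𝕜} (h : HSConv g A hA y) (hy : IsRep g yr y) (q k : ℕ) :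
    ∃ N : ℝ → ℕ, (∀ ε, k ≤ N ε) ∧
      EvS fun ε => ‖∑ n ∈ Finset.range (N ε + 1), A n ε - yr ε‖ ≤ g.ρ ε ^ q := by
  obtain ⟨M, hM⟩ := h (q + 1)
  obtain ⟨⟨N₀, hN₀⟩, rfl⟩ := Quotient.exists_rep M
  have hN : g.NMod fun ε => max (N₀ ε) k := (hN₀.add (g.nmod_const k)).mono fun ε =>
    max_le (Nat.le_add_right _ _) (Nat.le_add_left _ _)
  have hle : Nt.le g (Quotient.mk _ ⟨N₀, hN₀⟩) (Nt.mk g _ hN) :=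
    ⟨_, _, rfl, rfl, 1, one_pos, le_rfl, fun ε _ _ => le_max_left _ _⟩
  exact ⟨_, fun ε => le_max_right _ _,
    GQ.evs_norm_sub_le_of_absLt_dpow (hM _ hle) ⟨hA _ hN, rfl⟩ hy⟩

end Representatives

theorem GQ.invertibleOn_of_hsConv_pSeries {g : Gauge} {T : ℕ → ℝ → ℂ} {zr cr : ℝ → ℂ}
    {hS : g.SMod (PSeriesNet T zr cr)} {y : Ct g} {Q R q k p : ℕ}
    (hy : HSConv g (PSeriesNet T zr cr) hS y)
    (hQR : EvS fun ε => ∀ n : ℕ, ‖T n ε‖ ≤ g.ρ ε ^ (-((n * Q + R : ℕ) : ℤ)))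
    (hhead : ∀ j < k, g.Negl (T j))
    (hub : EvS fun ε => ‖zr ε - cr ε‖ ≤ g.ρ ε ^ (q + R + (k + 1) * Q + 3))
    (hlb : EvS fun ε => g.ρ ε ^ p ≤ ‖zr ε - cr ε‖) :
    GQ.InvertibleOn g {ε | 0 < ε ∧ ε ≤ 1 ∧ g.ρ ε ^ q < ‖T k ε‖} y := by
  set c := q + p * k
  obtain ⟨yr, hyr⟩ := GQ.exists_isRep y
  obtain ⟨N, hkN, hN⟩ := hy.exists_evs_norm_sub_le hyr (c + 2) k
  have hsmall : g.Negl fun ε => ∑ j ∈ Finset.range k, ‖T j ε‖ :=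
    g.negl_finset_sum _ fun j hj => (hhead j (Finset.mem_range.1 hj)).norm
  obtain ⟨hyr, rfl⟩ := hyr
  refine ⟨⟨yr, hyr⟩, rfl, c + 1, ?_⟩
  obtain ⟨ε₀, hε₀, hε₀1, hall⟩ := (((((hQR.and hub).and hlb).and hN).and (hsmall (c + 2))).and
    (g.evs_le (δ := 1 / 2) (by norm_num))).and (g.evs_mul_pow_succ_le 4 c)
  refine ⟨ε₀, hε₀, hε₀1, fun ε ⟨_, hε1, hεL⟩ hε hεε₀ => ?_⟩
  obtain ⟨⟨⟨⟨⟨⟨hT, hw_le⟩, hw_ge⟩, hyN⟩, hhead_le⟩, hρ⟩, hρc⟩ := hall ε hε hεε₀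
  have hρ0 := g.pos ε hε hε1
  have hc : g.ρ ε ^ c ≤ g.ρ ε ^ q * ‖zr ε - cr ε‖ ^ k := by
    rw [pow_add, pow_mul]; gcongr
  have hc2 : g.ρ ε ^ (c + 2) ≤ g.ρ ε ^ (c + 1) := g.pow_le_pow_of_le hε hε1 (by omega)
  simp only [Real.norm_eq_abs] at hhead_le
  have hdom := le_norm_sum_of_dominant_coeff hρ0 hρ (hkN ε)
    (fun n => by simpa only [zpow_neg, zpow_natCast] using hT n) hεL.le
    (by linarith [le_abs_self (∑ j ∈ Finset.range k, ‖T j ε‖)]) hw_le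
  have htri := norm_sub_norm_le (∑ n ∈ Finset.range (N ε + 1), PSeriesNet T zr cr n ε) (yr ε)
  simp only [PSeriesNet] at htri hyN
  linarith

theorem stmt16_general (g : Gauge) (z₀ : Ct g)
    (f : Ct g → Ct g) (D : GHFData)
    (z0r : ℝ → ℂ) (hgood : GoodRep g D f z0r z₀)
    (T : ℕ → ℝ → ℂ)
    (hTdef : T = fun n ε => iteratedDeriv n (D.F ε) (z0r ε) / (n.factorial : ℂ))
    (hTW : g.WMod T)
    (s : Rt g) (hs : Rt.lt g (GQ.zero g ℝ) s)
    (hser : ∀ w : Ct g, GQ.absLt g w z₀ s → ∀ wr : ℝ → ℂ, IsRep g wr w →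
      ∃ hS : g.SMod (PSeriesNet T wr z0r), HSConv g (PSeriesNet T wr z0r) hS (f w))
    (hn : ∃ n : ℕ, 1 ≤ n ∧ ¬ g.Negl fun ε => iteratedDeriv n (D.F ε) (z0r ε)) :
    ∃ L : Set ℝ, L ⊆ Set.Ioc 0 1 ∧ (∀ δ : ℝ, 0 < δ → ∃ ε ∈ L, ε < δ) ∧
      ∃ r : Rt g, Rt.lt g (GQ.zero g ℝ) r ∧ Rt.le g r s ∧
        ∀ z : Ct g, GQ.absLt g z z₀ r →
          Rt.lt g (GQ.zero g ℝ) (GQ.abs g (GQ.sub g z z₀)) →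
          GQ.InvertibleOn g L (f z) := by
  classical
  have hex : ∃ n, ¬ g.Negl (T n) := by
    obtain ⟨n, -, hn⟩ := hn
    refine ⟨n, fun hT => hn ?_⟩
    simpa [hTdef, div_mul_cancel₀, Nat.factorial_ne_zero] using hT.mul_const (n.factorial : ℂ)
  obtain ⟨k, hTk, hTj⟩ : ∃ k, ¬ g.Negl (T k) ∧ ∀ j < k, g.Negl (T j) :=
    ⟨Nat.find hex, Nat.find_spec hex, fun j hj => not_not.mp (Nat.find_min hex hj)⟩
  obtain ⟨q, hL⟩ := g.exists_subpoint_of_not_negl hTk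
  obtain ⟨Q, R, hQR⟩ := hTW
  obtain ⟨sr, hsr⟩ := GQ.exists_isRep s
  obtain ⟨m, hm⟩ := Rt.evs_pow_le_of_pos hs hsr
  refine ⟨_, fun ε hε => ⟨hε.1, hε.2.1⟩, hL, g.dpow (q + R + (k + 1) * Q + 3 + m + 1),
    g.dpow_pos _, Rt.dpow_le_of_evs hsr hm (by omega), fun z hz hzpos => ?_⟩
  obtain ⟨zr, hzr⟩ := GQ.exists_isRep z
  have hub := GQ.evs_norm_sub_le_of_absLt_dpow hz hzr hgood.1
  obtain ⟨p, hlb⟩ := Rt.evs_pow_le_of_pos hzpos (hzr.abs_sub hgood.1)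
  have hzs : GQ.absLt g z z₀ s :=
    GQ.absLt_of_evs_norm_sub_le hzr hgood.1 hsr hm (g.evs_le_pow_of_le hub (by omega))
  obtain ⟨_, hconv⟩ := hser z hzs zr hzr
  exact GQ.invertibleOn_of_hsConv_pSeries hconv hQR hTj (g.evs_le_pow_of_le hub (by omega)) hlb

/-- isolated zeros on a subpoint for generalized holomorphic functions. -/
theorem stmt16 (g : Gauge) (U : Set (Ct g)) (hU : SharplyOpen g U) (z₀ : Ct g)
    (hz₀U : z₀ ∈ U) (f : Ct g → Ct g) (D : GHFData) (hGHF : IsGHF g U f D)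
    (z0r : ℝ → ℂ) (hgood : GoodRep g D f z0r z₀)
    (T : ℕ → ℝ → ℂ)
    (hTdef : T = fun n ε => iteratedDeriv n (D.F ε) (z0r ε) / (n.factorial : ℂ))
    (hTW : g.WMod T)
    (s : Rt g) (hs : Rt.lt g (GQ.zero g ℝ) s)
    (hball : ∀ w : Ct g, GQ.absLt g w z₀ s → w ∈ U ∧ w ∈ convSet g T z₀)
    (hser : ∀ w : Ct g, GQ.absLt g w z₀ s → ∀ wr : ℝ → ℂ, IsRep g wr w →
      ∃ hS : g.SMod (PSeriesNet T wr z0r), HSConv g (PSeriesNet T wr z0r) hS (f w))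
    (hf0 : f z₀ = GQ.zero g ℂ)
    (hn : ∃ n : ℕ, 1 ≤ n ∧ ¬ g.Negl fun ε => iteratedDeriv n (D.F ε) (z0r ε)) :
    ∃ L : Set ℝ, L ⊆ Set.Ioc 0 1 ∧ (∀ δ : ℝ, 0 < δ → ∃ ε ∈ L, ε < δ) ∧
      ∃ r : Rt g, Rt.lt g (GQ.zero g ℝ) r ∧ Rt.le g r s ∧
        ∀ z : Ct g, GQ.absLt g z z₀ r →
          Rt.lt g (GQ.zero g ℝ) (GQ.abs g (GQ.sub g z z₀)) →
          GQ.InvertibleOn g L (f z) :=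
  stmt16_general g z₀ f D z0r hgood T hTdef hTW s hs hser hn
end
end
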